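/- arXiv:1201.0175 — 6 statements merged into one kernel-verified Lean document; each statement's English description precedes it below -/
import Mathlib

section
/- Let p, K be positive integers with K ≤ p. Let B be a real p×K matrix with columns b̃₁, …, b̃_K such that Bᵀ B is a diagonal matrix and the column norms are nonincreasing: ‖b̃₁‖ ≥ ‖b̃₂‖ ≥ … ≥ ‖b̃_K‖. Let Σ_u be a real symmetric p×p matrix and set Σ = B Bᵀ + Σ_u, with eigenvalues λ₁ ≥ … ≥ λ_p. Suppose there is δ > 0 such that ‖b̃_j‖² − ‖b̃_{j+1}‖² ≥ δ for every 1 ≤ j < K, ‖b̃_K‖² ≥ δ, and ‖Σ_u‖ ≤ δ/4. Then for every j ≤ K there exists a unit vector ξ_j with Σ ξ_j = λ_j ξ_j such that ‖ξ_j − b̃_j/‖b̃_j‖‖ ≤ 2√2 · ‖Σ_u‖ / δ. -/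
open Matrix BigOperators

/-- Spectral (operator) norm of a square real matrix (largest singular value). -/
noncomputable def specNorm {m : ℕ} (A : Matrix (Fin m) (Fin m) ℝ) : ℝ :=
  ‖Matrix.toEuclideanCLM (𝕜 := ℝ) A‖

/-- Euclidean norm of a vector in `ℝ^m`. -/
noncomputable def vecNorm {m : ℕ} (v : Fin m → ℝ) : ℝ :=
  Real.sqrt (∑ i, v i ^ 2)

/-!
Write `Σ = T + P` with `T = B Bᵀ` and `P = Σ_u`. Since the columns of `B` are orthogonal, the
normalised columns `e_j = b̃_j / ‖b̃_j‖`, completed to an orthonormal basis, diagonalise `T`, with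
eigenvalues `‖b̃_j‖²` followed by zeros; the gap hypotheses separate each `‖b̃_j‖²` by `δ` from all
the other eigenvalues of `T`. Weyl's inequality puts `λ_j` within `‖P‖ ≤ δ/4` of `‖b̃_j‖²`, so
`λ_j` stays `δ/2` away from every other eigenvalue of `T`. For a unit eigenvector `ξ` of `Σ` for
`λ_j`, `(λ_j - α_k) ⟪e_k, ξ⟫ = ⟪e_k, P ξ⟫`, hence `1 - ⟪e_j, ξ⟫² ≤ (2‖P‖/δ)²`, and with the right
sign of `ξ`, `‖ξ - e_j‖² ≤ 2 (1 - ⟪e_j, ξ⟫²) ≤ 8 ‖P‖² / δ²`.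
-/

open Module Submodule WithLp
open scoped RealInnerProductSpace

section Weyl

variable {E : Type*} [NormedAddCommGroup E] [InnerProductSpace ℝ E]

theorem inner_apply_le_of_mem_span_eigenvectors {ι : Type*} [Fintype ι] (T : E →ₗ[ℝ] E)
    {w : ι → E} (hw : Orthonormal ℝ w) {a : ι → ℝ} (hTw : ∀ k, T (w k) = a k • w k)
    {c : ℝ} (hc : ∀ k, a k ≤ c) {x : E} (hx : x ∈ span ℝ (Set.range w)) :
    ⟪x, T x⟫ ≤ c * ‖x‖ ^ 2 := by
  obtain ⟨f, rfl⟩ := (mem_span_range_iff_exists_fun ℝ).mp hx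
  have hTx : T (∑ k, f k • w k) = ∑ k, (f k * a k) • w k := by
    simp only [map_sum, map_smul, hTw, smul_smul]
  rw [hTx, ← real_inner_self_eq_norm_sq, hw.inner_sum, hw.inner_sum, Finset.mul_sum]
  refine Finset.sum_le_sum fun k _ => ?_
  simp only [conj_trivial]
  nlinarith [hc k, mul_self_nonneg (f k)]

theorem le_inner_apply_of_mem_span_eigenvectors {ι : Type*} [Fintype ι] (T : E →ₗ[ℝ] E)
    {w : ι → E} (hw : Orthonormal ℝ w) {a : ι → ℝ} (hTw : ∀ k, T (w k) = a k • w k)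
    {c : ℝ} (hc : ∀ k, c ≤ a k) {x : E} (hx : x ∈ span ℝ (Set.range w)) :
    c * ‖x‖ ^ 2 ≤ ⟪x, T x⟫ := by
  have := inner_apply_le_of_mem_span_eigenvectors (-T) hw (a := -a) (c := -c)
    (fun k => by simp [hTw k]) (fun k => neg_le_neg (hc k)) hx
  simp only [LinearMap.neg_apply, inner_neg_right] at this
  linarith

theorem Submodule.exists_ne_zero_mem_inf_of_finrank_lt [FiniteDimensional ℝ E]
    (S T : Submodule ℝ E) (h : finrank ℝ E < finrank ℝ S + finrank ℝ T) :
    ∃ x ≠ 0, x ∈ S ∧ x ∈ T := by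
  by_contra! hST
  refine (finrank_add_finrank_le_of_disjoint (disjoint_def.mpr fun x hxS hxT => ?_)).not_gt h
  by_contra hx
  exact hST x hx hxS hxT

theorem finrank_span_orthonormal_restrict {ι : Type*} {w : ι → E} (hw : Orthonormal ℝ w)
    (s : Finset ι) :
    finrank ℝ (span ℝ (Set.range (w ∘ ((↑) : s → ι)))) = s.card := by
  rw [finrank_span_eq_card (hw.comp _ Subtype.val_injective).linearIndependent,
    Fintype.card_coe]

/-- One half of Weyl's inequality, by the Courant–Fischer dimension count: the span of the top
`i + 1` eigenvectors of `T + P` meets the span of the bottom `n - i` eigenvectors of `T`. -/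
theorem eigenvalue_le_eigenvalue_add_of_inner_le [FiniteDimensional ℝ E] {n : ℕ}
    (hn : finrank ℝ E = n) (T P : E →ₗ[ℝ] E) {u v : Fin n → E}
    (hu : Orthonormal ℝ u) (hv : Orthonormal ℝ v) {α β : Fin n → ℝ}
    (hα : Antitone α) (hβ : Antitone β) (hTu : ∀ k, T (u k) = α k • u k)
    (hTv : ∀ k, (T + P) (v k) = β k • v k) {ρ : ℝ}
    (hP : ∀ x, ⟪x, P x⟫ ≤ ρ * ‖x‖ ^ 2) (i : Fin n) :
    β i ≤ α i + ρ := by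
  obtain ⟨x, hx0, hxv, hxu⟩ := Submodule.exists_ne_zero_mem_inf_of_finrank_lt
    (span ℝ (Set.range (v ∘ ((↑) : Finset.Iic i → Fin n))))
    (span ℝ (Set.range (u ∘ ((↑) : Finset.Ici i → Fin n)))) (by
      rw [finrank_span_orthonormal_restrict hv, finrank_span_orthonormal_restrict hu,
        Fin.card_Iic, Fin.card_Ici, hn]
      omega)
  have hlow : β i * ‖x‖ ^ 2 ≤ ⟪x, (T + P) x⟫ :=
    le_inner_apply_of_mem_span_eigenvectors (T + P) (hv.comp _ Subtype.val_injective)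
      (a := β ∘ ((↑) : Finset.Iic i → Fin n)) (fun k => hTv k)
      (fun k => hβ (Finset.mem_Iic.mp k.2)) hxv
  have hup : ⟪x, T x⟫ ≤ α i * ‖x‖ ^ 2 :=
    inner_apply_le_of_mem_span_eigenvectors T (hu.comp _ Subtype.val_injective)
      (a := α ∘ ((↑) : Finset.Ici i → Fin n)) (fun k => hTu k)
      (fun k => hα (Finset.mem_Ici.mp k.2)) hxu
  rw [LinearMap.add_apply, inner_add_right] at hlow
  have hx2 : 0 < ‖x‖ ^ 2 := by positivity
  nlinarith [hP x]

theorem abs_eigenvalue_sub_le [FiniteDimensional ℝ E] {n : ℕ}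
    (hn : finrank ℝ E = n) (T P : E →ₗ[ℝ] E) {u v : Fin n → E}
    (hu : Orthonormal ℝ u) (hv : Orthonormal ℝ v) {α β : Fin n → ℝ}
    (hα : Antitone α) (hβ : Antitone β) (hTu : ∀ k, T (u k) = α k • u k)
    (hTv : ∀ k, (T + P) (v k) = β k • v k) {ρ : ℝ}
    (hP : ∀ x, ‖P x‖ ≤ ρ * ‖x‖) (i : Fin n) :
    |β i - α i| ≤ ρ := by
  have hquad (Q : E →ₗ[ℝ] E) (hQ : ∀ x, ‖Q x‖ ≤ ρ * ‖x‖) (x : E) :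
      ⟪x, Q x⟫ ≤ ρ * ‖x‖ ^ 2 := by
    nlinarith [real_inner_le_norm x (Q x), hQ x, norm_nonneg x]
  have hup := eigenvalue_le_eigenvalue_add_of_inner_le hn T P hu hv hα hβ hTu hTv
    (hquad P hP) i
  have hdown := eigenvalue_le_eigenvalue_add_of_inner_le hn (T + P) (-P) hv hu hβ hα hTv
    (by simpa using hTu) (hquad (-P) (by simpa using hP)) i
  rw [abs_le]
  constructor <;> linarith

end Weyl

section DavisKahan

variable {E : Type*} [NormedAddCommGroup E] [InnerProductSpace ℝ E]

theorem sub_mul_inner_eq_inner_apply {T P : E →ₗ[ℝ] E} (hT : T.IsSymmetric) {u v : E}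
    {a l : ℝ} (hu : T u = a • u) (hv : (T + P) v = l • v) :
    (l - a) * ⟪u, v⟫ = ⟪u, P v⟫ := by
  have h := congrArg (fun y => ⟪u, y⟫) hv
  simp only [LinearMap.add_apply, inner_add_right, ← hT u v, hu, real_inner_smul_left,
    real_inner_smul_right] at h
  linarith

theorem sq_mul_norm_sq_sub_inner_sq_le {ι : Type*} [Fintype ι] {T P : E →ₗ[ℝ] E}
    (hT : T.IsSymmetric) (b : OrthonormalBasis ι ℝ E) {α : ι → ℝ}
    (hb : ∀ k, T (b k) = α k • b k) {v : E} {l : ℝ} (hv : (T + P) v = l • v) {j : ι} {g : ℝ}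
    (hg : 0 ≤ g) (hgap : ∀ k ≠ j, g ≤ |l - α k|) :
    g ^ 2 * (‖v‖ ^ 2 - ⟪b j, v⟫ ^ 2) ≤ ‖P v‖ ^ 2 := by
  classical
  have hoff : ‖v‖ ^ 2 - ⟪b j, v⟫ ^ 2 = ∑ k ∈ Finset.univ.erase j, ⟪b k, v⟫ ^ 2 := by
    rw [← b.sum_sq_inner_right, ← Finset.add_sum_erase _ _ (Finset.mem_univ j)]
    ring
  calc g ^ 2 * (‖v‖ ^ 2 - ⟪b j, v⟫ ^ 2)
      = ∑ k ∈ Finset.univ.erase j, g ^ 2 * ⟪b k, v⟫ ^ 2 := by rw [hoff, Finset.mul_sum]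
    _ ≤ ∑ k ∈ Finset.univ.erase j, ⟪b k, P v⟫ ^ 2 := by
        refine Finset.sum_le_sum fun k hk => ?_
        rw [← sub_mul_inner_eq_inner_apply hT (hb k) hv, mul_pow, ← sq_abs (l - α k)]
        have := hgap k (Finset.ne_of_mem_erase hk)
        gcongr
    _ ≤ ∑ k, ⟪b k, P v⟫ ^ 2 :=
        Finset.sum_le_sum_of_subset_of_nonneg (Finset.erase_subset _ _)
          fun k _ _ => sq_nonneg _
    _ = ‖P v‖ ^ 2 := b.sum_sq_inner_right _

theorem exists_eq_or_eq_neg_norm_sub_sq_le {u v : E} (hu : ‖u‖ = 1) (hv : ‖v‖ = 1) :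
    ∃ w, (w = v ∨ w = -v) ∧ ‖w - u‖ ^ 2 ≤ 2 * (1 - ⟪u, v⟫ ^ 2) := by
  have hc : |⟪u, v⟫| ≤ 1 := by simpa [hu, hv] using abs_real_inner_le_norm u v
  have hsq : ⟪u, v⟫ ^ 2 ≤ |⟪u, v⟫| := by
    rw [← sq_abs]; nlinarith [abs_nonneg ⟪u, v⟫]
  rcases le_total 0 ⟪u, v⟫ with h | h
  · refine ⟨v, Or.inl rfl, ?_⟩
    rw [norm_sub_sq_real, hu, hv, real_inner_comm]
    linarith [abs_of_nonneg h]
  · refine ⟨-v, Or.inr rfl, ?_⟩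
    rw [norm_sub_sq_real, norm_neg, hu, hv, inner_neg_left, real_inner_comm]
    linarith [abs_of_nonpos h]

theorem exists_eq_or_eq_neg_norm_sub_le_of_gap {ι : Type*} [Fintype ι] {T P : E →ₗ[ℝ] E}
    (hT : T.IsSymmetric) (b : OrthonormalBasis ι ℝ E) {α : ι → ℝ}
    (hb : ∀ k, T (b k) = α k • b k) {v : E} (hv1 : ‖v‖ = 1) {l : ℝ}
    (hv : (T + P) v = l • v) {j : ι} {g ρ : ℝ} (hg : 0 < g)
    (hgap : ∀ k ≠ j, g ≤ |l - α k|) (hP : ‖P v‖ ≤ ρ) :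
    ∃ w, (w = v ∨ w = -v) ∧ ‖w - b j‖ ≤ √2 * ρ / g := by
  obtain ⟨w, hw, hwb⟩ := exists_eq_or_eq_neg_norm_sub_sq_le (b.orthonormal.1 j) hv1
  have hoff := sq_mul_norm_sq_sub_inner_sq_le hT b hb hv hg.le hgap
  rw [hv1, one_pow] at hoff
  have hρ : 0 ≤ ρ := (norm_nonneg _).trans hP
  refine ⟨w, hw, (pow_le_pow_iff_left₀ (norm_nonneg _) (by positivity) two_ne_zero).mp ?_⟩
  calc ‖w - b j‖ ^ 2 ≤ 2 * (1 - ⟪b j, v⟫ ^ 2) := hwb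
    _ ≤ 2 * (ρ ^ 2 / g ^ 2) := by
        gcongr
        rw [le_div_iff₀ (by positivity)]
        nlinarith [pow_le_pow_left₀ (norm_nonneg _) hP 2]
    _ = (√2 * ρ / g) ^ 2 := by rw [div_pow, mul_pow, Real.sq_sqrt zero_le_two]; ring

end DavisKahan

section OrthogonalFamily

variable {E : Type*} [NormedAddCommGroup E] [InnerProductSpace ℝ E] {ι : Type*}

theorem orthonormal_inv_norm_smul {w : ι → E} (hw : Pairwise fun a b => ⟪w a, w b⟫ = 0)
    (hw0 : ∀ a, w a ≠ 0) : Orthonormal ℝ fun a => ‖w a‖⁻¹ • w a := by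
  refine ⟨fun a => ?_, fun a b hab => ?_⟩
  · rw [norm_smul, norm_inv, norm_norm, inv_mul_cancel₀ (norm_ne_zero_iff.mpr (hw0 a))]
  · dsimp only
    rw [real_inner_smul_left, real_inner_smul_right, hw hab, mul_zero, mul_zero]

theorem Orthonormal.exists_orthonormalBasis_castLE [FiniteDimensional ℝ E] {K p : ℕ}
    (hKp : K ≤ p) (hE : finrank ℝ E = p) {u : Fin K → E} (hu : Orthonormal ℝ u) :
    ∃ b : OrthonormalBasis (Fin p) ℝ E, ∀ a, b (Fin.castLE hKp a) = u a := by
  classical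
  let v : Fin p → E := fun k => if h : (k : ℕ) < K then u ⟨k, h⟩ else 0
  have hvu : ∀ a, v (Fin.castLE hKp a) = u a := fun a => dif_pos a.2
  have hv : Orthonormal ℝ ((Set.range (Fin.castLE hKp)).domRestrict v) := by
    refine ⟨?_, ?_⟩
    · rintro ⟨_, a, rfl⟩
      simpa [hvu] using hu.1 a
    · rintro ⟨_, a, rfl⟩ ⟨_, a', rfl⟩ h
      simpa [hvu] using hu.2 fun ha => h (by subst ha; rfl)
  obtain ⟨b, hb⟩ := hv.exists_orthonormalBasis_extension_of_card_eq (by simpa using hE)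
  exact ⟨b, fun a => by rw [hb _ (Set.mem_range_self a), hvu]⟩

variable [Fintype ι] {T : E → E} {w : ι → E}

theorem apply_eq_norm_sq_smul_of_eq_sum_inner_smul (hw : Pairwise fun a b => ⟪w a, w b⟫ = 0)
    (hT : ∀ x, T x = ∑ a, ⟪w a, x⟫ • w a) (b : ι) : T (w b) = ‖w b‖ ^ 2 • w b := by
  classical
  rw [hT, Finset.sum_eq_single b (fun a _ hab => by rw [hw hab, zero_smul])
    (fun h => absurd (Finset.mem_univ b) h), real_inner_self_eq_norm_sq]

theorem apply_eq_zero_of_eq_sum_inner_smul (hT : ∀ x, T x = ∑ a, ⟪w a, x⟫ • w a) {x : E}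
    (hx : ∀ a, ⟪w a, x⟫ = 0) : T x = 0 := by
  simp [hT, hx]

end OrthogonalFamily

namespace Fin

theorem add_le_of_lt_of_forall_le_sub {K : ℕ} {g : Fin K → ℝ} {δ : ℝ} (hδ : 0 ≤ δ)
    (hgap : ∀ (j : ℕ) (hj : j + 1 < K), δ ≤ g ⟨j, Nat.lt_of_succ_lt hj⟩ - g ⟨j + 1, hj⟩)
    {a b : Fin K} (hab : a < b) : g b + δ ≤ g a := by
  obtain ⟨a, ha⟩ := a
  obtain ⟨b, hb⟩ := b
  change a < b at hab
  induction b, hab using Nat.le_induction with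
  | base => linarith [hgap a hb]
  | succ b hab ih =>
    have := hgap b hb
    linarith [ih (by omega)]

theorem antitone_of_forall_le_sub {K : ℕ} {g : Fin K → ℝ} {δ : ℝ} (hδ : 0 ≤ δ)
    (hgap : ∀ (j : ℕ) (hj : j + 1 < K), δ ≤ g ⟨j, Nat.lt_of_succ_lt hj⟩ - g ⟨j + 1, hj⟩) :
    Antitone g := fun a b hab => by
  rcases hab.eq_or_lt with rfl | hlt
  · exact le_rfl
  · linarith [add_le_of_lt_of_forall_le_sub hδ hgap hlt]

noncomputable def zeroExtend {K p : ℕ} (μ : Fin K → ℝ) (k : Fin p) : ℝ :=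
  if h : (k : ℕ) < K then μ ⟨k, h⟩ else 0

@[simp]
theorem zeroExtend_castLE {K p : ℕ} (hKp : K ≤ p) (μ : Fin K → ℝ) (a : Fin K) :
    zeroExtend μ (castLE hKp a) = μ a :=
  dif_pos a.2

theorem antitone_zeroExtend {K p : ℕ} {μ : Fin K → ℝ} (hμ : Antitone μ) (hμ0 : ∀ a, 0 ≤ μ a) :
    Antitone (zeroExtend μ : Fin p → ℝ) := by
  intro k l hkl
  unfold zeroExtend
  split_ifs with hl hk hk
  · exact hμ (show (k : ℕ) ≤ l from hkl)
  · exact absurd (lt_of_le_of_lt (show (k : ℕ) ≤ l from hkl) hl) hk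
  · exact hμ0 _
  · exact le_rfl

theorem le_abs_sub_zeroExtend {K p : ℕ} (hKp : K ≤ p) {μ : Fin K → ℝ} {δ : ℝ}
    (hμ : ∀ a, δ ≤ μ a) (hgap : ∀ a b, a < b → μ b + δ ≤ μ a) (j : Fin K) {k : Fin p}
    (hk : k ≠ castLE hKp j) : δ ≤ |zeroExtend μ (castLE hKp j) - zeroExtend μ k| := by
  rw [zeroExtend_castLE]
  by_cases hkK : (k : ℕ) < K
  · obtain ⟨a, rfl⟩ : ∃ a : Fin K, castLE hKp a = k := ⟨⟨k, hkK⟩, rfl⟩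
    rw [zeroExtend_castLE]
    rcases lt_or_gt_of_ne (fun h : a = j => hk (h ▸ rfl)) with h | h
    · linarith [hgap a j h, neg_abs_le (μ j - μ a)]
    · linarith [hgap j a h, le_abs_self (μ j - μ a)]
  · rw [zeroExtend, dif_neg hkK, sub_zero]
    exact (hμ j).trans (le_abs_self _)

end Fin

theorem vecNorm_eq_norm_toLp {m : ℕ} (v : Fin m → ℝ) : vecNorm v = ‖toLp 2 v‖ := by
  simp [vecNorm, EuclideanSpace.norm_eq, sq_abs]

theorem norm_toEuclideanLin_apply_le {m : ℕ} (A : Matrix (Fin m) (Fin m) ℝ)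
    (x : EuclideanSpace ℝ (Fin m)) : ‖toEuclideanLin A x‖ ≤ specNorm A * ‖x‖ :=
  (toEuclideanCLM (𝕜 := ℝ) A).le_opNorm x

namespace Matrix

section

variable {m n : Type*} [Fintype m] (B : Matrix m n ℝ)

theorem inner_toLp_transpose (a b : n) :
    ⟪toLp 2 (Bᵀ a), toLp 2 (Bᵀ b)⟫ = (Bᵀ * B) a b := by
  simp [EuclideanSpace.inner_eq_star_dotProduct, mul_apply, dotProduct, mul_comm]

theorem norm_toLp_transpose_sq (a : n) : ‖toLp 2 (Bᵀ a)‖ ^ 2 = ∑ i, B i a ^ 2 := by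
  simp [EuclideanSpace.norm_eq, sq_abs, Real.sq_sqrt (Finset.sum_nonneg fun i _ => sq_nonneg _)]

theorem toEuclideanLin_mul_transpose_apply [Fintype n] [DecidableEq m] (x : EuclideanSpace ℝ m) :
    toEuclideanLin (B * Bᵀ) x = ∑ a, ⟪toLp 2 (Bᵀ a), x⟫ • toLp 2 (Bᵀ a) := by
  ext i
  simp only [toLpLin_apply, PiLp.toLp_apply, mulVec, dotProduct, mul_apply, transpose_apply,
    WithLp.ofLp_sum, WithLp.ofLp_smul, Finset.sum_apply, Pi.smul_apply, smul_eq_mul,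
    EuclideanSpace.inner_eq_star_dotProduct, star_trivial, Finset.sum_mul]
  rw [Finset.sum_comm]
  exact Finset.sum_congr rfl fun _ _ => Finset.sum_congr rfl fun _ _ => by ring

end

theorem exists_orthonormalBasis_toEuclideanLin_mul_transpose {p K : ℕ} (hKp : K ≤ p)
    (B : Matrix (Fin p) (Fin K) ℝ) (hdiag : (Bᵀ * B).IsDiag) (hB : ∀ a, toLp 2 (Bᵀ a) ≠ 0) :
    ∃ b : OrthonormalBasis (Fin p) ℝ (EuclideanSpace ℝ (Fin p)),
      (∀ a, b (Fin.castLE hKp a) = ‖toLp 2 (Bᵀ a)‖⁻¹ • toLp 2 (Bᵀ a)) ∧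
      ∀ k, toEuclideanLin (B * Bᵀ) (b k) = Fin.zeroExtend (fun a => ∑ i, B i a ^ 2) k • b k := by
  set w : Fin K → EuclideanSpace ℝ (Fin p) := fun a => toLp 2 (Bᵀ a)
  have hw : Pairwise fun a b => ⟪w a, w b⟫ = 0 := fun a b hab => by
    simp only [w, inner_toLp_transpose]
    exact hdiag hab
  have hT := toEuclideanLin_mul_transpose_apply B
  obtain ⟨b, hb⟩ := (orthonormal_inv_norm_smul hw hB).exists_orthonormalBasis_castLE hKp
    finrank_euclideanSpace_fin
  refine ⟨b, hb, fun k => ?_⟩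
  by_cases hk : (k : ℕ) < K
  · obtain ⟨a, rfl⟩ : ∃ a, Fin.castLE hKp a = k := ⟨⟨k, hk⟩, rfl⟩
    rw [hb, Fin.zeroExtend_castLE, map_smul, apply_eq_norm_sq_smul_of_eq_sum_inner_smul hw hT,
      norm_toLp_transpose_sq, smul_comm]
  · have hx : ∀ a, ⟪w a, b k⟫ = 0 := fun a => by
      have : ⟪b (Fin.castLE hKp a), b k⟫ = 0 :=
        b.orthonormal.2 fun h => hk (by rw [← h]; exact a.2)
      rw [hb, real_inner_smul_left] at this
      exact (mul_eq_zero.mp this).resolve_left (inv_ne_zero (norm_ne_zero_iff.mpr (hB a)))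
    rw [apply_eq_zero_of_eq_sum_inner_smul hT hx, Fin.zeroExtend, dif_neg hk, zero_smul]

theorem IsHermitian.toEuclideanLin_eigenvectorBasis {n : Type*} [Fintype n]
    [DecidableEq n] {S : Matrix n n ℝ} (hS : S.IsHermitian) (k : n) :
    toEuclideanLin S (hS.eigenvectorBasis k) = hS.eigenvalues k • hS.eigenvectorBasis k :=
  congrArg (toLp 2) (hS.mulVec_eigenvectorBasis k)

end Matrix

section Perturbation

variable {E : Type*} [NormedAddCommGroup E] [InnerProductSpace ℝ E] [FiniteDimensional ℝ E]

theorem exists_eq_or_eq_neg_norm_sub_le_of_perturbation {n : ℕ} (hn : finrank ℝ E = n)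
    {T P : E →ₗ[ℝ] E} (hT : T.IsSymmetric) (b : OrthonormalBasis (Fin n) ℝ E) {α : Fin n → ℝ}
    (hα : Antitone α) (hb : ∀ k, T (b k) = α k • b k) {v : Fin n → E} (hv : Orthonormal ℝ v)
    {β : Fin n → ℝ} (hβ : Antitone β) (hTv : ∀ k, (T + P) (v k) = β k • v k) {ρ δ : ℝ}
    (hδ : 0 < δ) (hP : ∀ x, ‖P x‖ ≤ ρ * ‖x‖) (hρ : ρ ≤ δ / 2) (j : Fin n)
    (hsep : ∀ k ≠ j, δ ≤ |α j - α k|) :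
    ∃ w, (w = v j ∨ w = -v j) ∧ ‖w - b j‖ ≤ 2 * √2 * ρ / δ := by
  have hweyl := abs_eigenvalue_sub_le hn T P b.orthonormal hv hα hβ hb hTv hP j
  have hgap : ∀ k ≠ j, δ / 2 ≤ |β j - α k| := fun k hk => by
    linarith [hsep k hk, abs_sub_le (α j) (β j) (α k), abs_sub_comm (α j) (β j)]
  obtain ⟨w, hw, hdist⟩ := exists_eq_or_eq_neg_norm_sub_le_of_gap hT b hb (hv.1 j) (hTv j)
    (half_pos hδ) hgap ((hP (v j)).trans_eq (by rw [hv.1 j, mul_one]))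
  exact ⟨w, hw, hdist.trans_eq (by ring)⟩

end Perturbation

theorem stmt1_general (p K : ℕ) (hK : 0 < K) (hKp : K ≤ p)
    (B : Matrix (Fin p) (Fin K) ℝ)
    (hdiag : (Bᵀ * B).IsDiag)
    (Su : Matrix (Fin p) (Fin p) ℝ)
    (hS : (B * Bᵀ + Su).IsHermitian)
    (lam : Fin p → ℝ)
    (hlam : ∃ σ : Equiv.Perm (Fin p), lam = hS.eigenvalues ∘ σ)
    (hanti : Antitone lam)
    (δ : ℝ) (hδ : 0 < δ)
    (hgap : ∀ (j : ℕ) (hj : j + 1 < K),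
      δ ≤ (∑ i, (B i ⟨j, Nat.lt_of_succ_lt hj⟩) ^ 2) - ∑ i, (B i ⟨j + 1, hj⟩) ^ 2)
    (hlast : δ ≤ ∑ i, (B i ⟨K - 1, Nat.sub_lt hK Nat.one_pos⟩) ^ 2)
    (hsmall : specNorm Su ≤ δ / 4) :
    ∀ j : Fin K, ∃ ξ : Fin p → ℝ,
      vecNorm ξ = 1 ∧
      (B * Bᵀ + Su) *ᵥ ξ = lam (Fin.castLE hKp j) • ξ ∧
      vecNorm (ξ - (vecNorm fun i => B i j)⁻¹ • fun i => B i j)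
        ≤ 2 * Real.sqrt 2 * specNorm Su / δ := by
  obtain ⟨σ, rfl⟩ := hlam
  intro j
  set μ : Fin K → ℝ := fun a => ∑ i, B i a ^ 2
  have hμanti : Antitone μ := Fin.antitone_of_forall_le_sub hδ.le hgap
  have hμδ : ∀ a, δ ≤ μ a := fun a =>
    hlast.trans (hμanti (Fin.le_def.mpr (show (a : ℕ) ≤ K - 1 by omega)))
  obtain ⟨b, hb_col, hb_eig⟩ := B.exists_orthonormalBasis_toEuclideanLin_mul_transpose hKp hdiag
    fun a h => (hδ.trans_le (hμδ a)).ne' <| by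
      rw [show μ a = _ from (B.norm_toLp_transpose_sq a).symm, h, norm_zero, sq, mul_zero]
  obtain ⟨w, hw, hdist⟩ := exists_eq_or_eq_neg_norm_sub_le_of_perturbation
    finrank_euclideanSpace_fin
    (isSymmetric_toEuclideanLin_iff.mpr (by simpa using isHermitian_mul_conjTranspose_self B)) b
    (Fin.antitone_zeroExtend hμanti fun a => hδ.le.trans (hμδ a)) hb_eig
    (hS.eigenvectorBasis.orthonormal.comp σ σ.injective) hanti
    (fun k => by rw [← map_add]; exact hS.toEuclideanLin_eigenvectorBasis (σ k)) hδ
    (norm_toEuclideanLin_apply_le Su) (by linarith) (Fin.castLE hKp j)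
    fun k hk => Fin.le_abs_sub_zeroExtend hKp hμδ
      (fun a b => Fin.add_le_of_lt_of_forall_le_sub hδ.le hgap) j hk
  refine ⟨ofLp w, ?_, ?_, ?_⟩
  · rw [vecNorm_eq_norm_toLp]
    rcases hw with rfl | rfl <;> simp
  · rcases hw with rfl | rfl <;> simp [Matrix.mulVec_neg, hS.mulVec_eigenvectorBasis]
  · rw [vecNorm_eq_norm_toLp, vecNorm_eq_norm_toLp]
    have hξ : toLp 2 (ofLp w - ‖toLp 2 fun i => B i j‖⁻¹ • fun i => B i j) =
        w - b (Fin.castLE hKp j) := by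
      rw [hb_col]
      rfl
    rwa [hξ]

/-- **Proposition 2.2** (sin-theta bound).  With `Σ = B Bᵀ + Su`, `Bᵀ B` diagonal,
nonincreasing column norms separated by gaps of size at least `δ`, the last squared
column norm at least `δ`, and `‖Su‖ ≤ δ/4`, for every `j ≤ K` there is a unit
eigenvector `ξ_j` of `Σ` for the eigenvalue `lam j` with
`‖ξ_j − b̃_j/‖b̃_j‖‖ ≤ 2√2 ‖Su‖ / δ`. -/
theorem stmt1 (p K : ℕ) (hp : 0 < p) (hK : 0 < K) (hKp : K ≤ p)
    (B : Matrix (Fin p) (Fin K) ℝ)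
    (hdiag : (Bᵀ * B).IsDiag)
    (hmono : Antitone fun j : Fin K => Real.sqrt (∑ i, (B i j) ^ 2))
    (Su : Matrix (Fin p) (Fin p) ℝ) (hSu : Su.IsHermitian)
    (hS : (B * Bᵀ + Su).IsHermitian)
    (lam : Fin p → ℝ)
    (hlam : ∃ σ : Equiv.Perm (Fin p), lam = hS.eigenvalues ∘ σ)
    (hanti : Antitone lam)
    (δ : ℝ) (hδ : 0 < δ)
    (hgap : ∀ (j : ℕ) (hj : j + 1 < K),
      δ ≤ (∑ i, (B i ⟨j, Nat.lt_of_succ_lt hj⟩) ^ 2) - ∑ i, (B i ⟨j + 1, hj⟩) ^ 2)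
    (hlast : δ ≤ ∑ i, (B i ⟨K - 1, Nat.sub_lt hK Nat.one_pos⟩) ^ 2)
    (hsmall : specNorm Su ≤ δ / 4) :
    ∀ j : Fin K, ∃ ξ : Fin p → ℝ,
      vecNorm ξ = 1 ∧
      (B * Bᵀ + Su) *ᵥ ξ = lam (Fin.castLE hKp j) • ξ ∧
      vecNorm (ξ - (vecNorm fun i => B i j)⁻¹ • fun i => B i j)
        ≤ 2 * Real.sqrt 2 * specNorm Su / δ :=
  stmt1_general p K hK hKp B hdiag Su hS lam hlam hanti δ hδ hgap hlast hsmall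
end

section
/- Let Y be a real p×T matrix and let K be a positive integer with K ≤ min(p, T). Let S = T⁻¹ Y Yᵀ and let λ̂₁ ≥ λ̂₂ ≥ … ≥ λ̂_p be its eigenvalues in nonincreasing order. Let v₁, …, v_K be orthonormal eigenvectors of Yᵀ Y associated with its K largest eigenvalues (in nonincreasing order), let F̂ be the T×K matrix whose columns are √T·v₁, …, √T·v_K, and set Λ̂ = T⁻¹ Y F̂. Then there exists an orthonormal family ξ̂₁, …, ξ̂_p of eigenvectors of S with S ξ̂_i = λ̂_i ξ̂_i for each i, such that Λ̂ Λ̂ᵀ = Σ_{i=1}^{K} λ̂_i ξ̂_i ξ̂_iᵀ and S − Λ̂ Λ̂ᵀ = Σ_{i=K+1}^{p} λ̂_i ξ̂_i ξ̂_iᵀ. -/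
/-
The nonzero eigenvalues of `Y Yᵀ` and `Yᵀ Y` agree with multiplicities, because `Y` and `Yᵀ`
map the corresponding eigenspaces injectively into each other. Both eigenvalue lists are
nonnegative and sorted, so a sorted list is recovered from the counts `#{i | t < λ̂ i}` for
`t ≥ 0`, and `λ̂ i = μ i / T` for `i < K`. Hence the vectors `Y vᵢ` are mutually orthogonal
eigenvectors of `S` with `‖Y vᵢ‖² = μᵢ`; normalized, they extend eigenspace by eigenspace to an
orthonormal eigenbasis `ξ` of `S` with eigenvalue list `λ̂`. Then
`Λ̂ Λ̂ᵀ = T⁻¹ ∑_{i<K} (Y vᵢ)(Y vᵢ)ᵀ = ∑_{i<K} λ̂ᵢ ξᵢ ξᵢᵀ`, and the spectral decomposition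
`S = ∑ᵢ λ̂ᵢ ξᵢ ξᵢᵀ` gives the rest.
-/

open Matrix Module Submodule Finset

namespace Module.End

variable {K V W ι : Type*} [Field K] [AddCommGroup V] [Module K V] [AddCommGroup W]
  [Module K W]

theorem eigenspace_eq_span_of_basis {f : End K V} (b : Basis ι K V) {d : ι → K}
    (hb : ∀ i, f (b i) = d i • b i) (c : K) :
    eigenspace f c = span K (b '' {i | d i = c}) := by
  have hcoord : ∀ i x, b.coord i (f x) = d i * b.coord i x := by
    intro i x
    have : b.coord i ∘ₗ f = d i • b.coord i := b.ext fun j => by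
      by_cases hij : j = i <;> simp [hb, hij]
    exact congr($this x)
  ext x
  rw [mem_eigenspace_iff, b.mem_span_image]
  constructor
  · intro hx i hi
    have := hcoord i x
    rw [hx, map_smul, smul_eq_mul] at this
    exact (mul_right_cancel₀ (Finsupp.mem_support_iff.1 hi) this).symm
  · intro hsupp
    refine b.ext_elem fun i => ?_
    have := hcoord i x
    simp only [Basis.coord_apply] at this
    rw [this, map_smul, Finsupp.smul_apply, smul_eq_mul]
    by_cases hi : b.repr x i = 0
    · simp [hi]
    · rw [hsupp (Finsupp.mem_support_iff.2 hi)]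

theorem finrank_eigenspace_eq_card_filter [Fintype ι] [DecidableEq K] {f : End K V}
    (b : Basis ι K V) {d : ι → K} (hb : ∀ i, f (b i) = d i • b i) (c : K) :
    finrank K (eigenspace f c) = #{i | d i = c} := by
  rw [eigenspace_eq_span_of_basis b hb, Set.image_eq_range]
  exact (finrank_span_eq_card (b.linearIndependent.comp _ Subtype.val_injective)).trans
    (Fintype.card_subtype _)

theorem finrank_eigenspace_comp_le [FiniteDimensional K W] (A : V →ₗ[K] W) (B : W →ₗ[K] V)
    {c : K} (hc : c ≠ 0) :
    finrank K (eigenspace (B ∘ₗ A) c) ≤ finrank K (eigenspace (A ∘ₗ B) c) := by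
  have hmaps : ∀ x ∈ eigenspace (B ∘ₗ A) c, A x ∈ eigenspace (A ∘ₗ B) c := fun x hx => by
    rw [mem_eigenspace_iff, LinearMap.comp_apply] at hx ⊢
    rw [hx, map_smul]
  refine LinearMap.finrank_le_finrank_of_injective (f := A.restrict hmaps) ?_
  rw [← LinearMap.ker_eq_bot, LinearMap.ker_eq_bot']
  rintro ⟨x, hx⟩ hAx
  have hBAx := mem_eigenspace_iff.1 hx
  rw [LinearMap.comp_apply, show A x = 0 from congr_arg Subtype.val hAx, map_zero] at hBAx
  exact Subtype.ext ((smul_eq_zero.1 hBAx.symm).resolve_left hc)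

theorem finrank_eigenspace_comp_comm [FiniteDimensional K V] [FiniteDimensional K W]
    (A : V →ₗ[K] W) (B : W →ₗ[K] V) {c : K} (hc : c ≠ 0) :
    finrank K (eigenspace (A ∘ₗ B) c) = finrank K (eigenspace (B ∘ₗ A) c) :=
  (finrank_eigenspace_comp_le B A hc).antisymm (finrank_eigenspace_comp_le A B hc)

end Module.End

section SortedSequences

variable {α : Type*} [LinearOrder α]

theorem Antitone.lt_apply_iff_lt_card {n : ℕ} {a : Fin n → α} (ha : Antitone a) (t : α)
    (i : Fin n) : t < a i ↔ (i : ℕ) < #{j | t < a j} := by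
  constructor
  · intro hi
    have hsub : Iic i ⊆ ({j | t < a j} : Finset (Fin n)) := fun j hj =>
      mem_filter.2 ⟨mem_univ j, hi.trans_le (ha (mem_Iic.1 hj))⟩
    simpa using card_le_card hsub
  · intro hi
    by_contra hti
    have hsub : ({j | t < a j} : Finset (Fin n)) ⊆ Iio i := fun j hj => by
      rw [mem_Iio]
      by_contra hij
      exact hti ((mem_filter.1 hj).2.trans_le (ha (not_lt.1 hij)))
    have := card_le_card hsub
    simp only [Fin.card_Iio] at this
    omega

theorem card_filter_lt_eq_of_card_filter_eq {ι κ : Type*} [Fintype ι] [Fintype κ]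
    {a : ι → α} {b : κ → α} {t : α} (h : ∀ c, t < c → #{i | a i = c} = #{j | b j = c}) :
    #{i | t < a i} = #{j | t < b j} := by
  have hmulti : (univ.val.map a).filter (t < ·) = (univ.val.map b).filter (t < ·) := by
    ext c
    simp only [Multiset.count_filter, Multiset.count_map]
    split_ifs with hc
    · simpa [eq_comm, card_def, filter_val] using h c hc
    · rfl
  simpa [Multiset.filter_map, card_def, filter_val] using congr_arg Multiset.card hmulti

theorem Antitone.apply_le_of_card_filter_lt_eq [Zero α] {p q : ℕ} {a : Fin p → α}
    {b : Fin q → α} (ha : Antitone a) (hb : Antitone b)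
    (h : ∀ t, 0 ≤ t → #{i | t < a i} = #{j | t < b j}) {i : Fin p} {j : Fin q}
    (hij : (i : ℕ) = j) (hb0 : 0 ≤ b j) : a i ≤ b j := by
  by_contra! hlt
  have hi := (ha.lt_apply_iff_lt_card (b j) i).1 hlt
  rw [h _ hb0, hij, ← hb.lt_apply_iff_lt_card] at hi
  exact lt_irrefl _ hi

theorem Antitone.apply_eq_of_card_filter_eq [Zero α] {p q : ℕ} {a : Fin p → α}
    {b : Fin q → α} (ha : Antitone a) (hb : Antitone b) (ha0 : ∀ i, 0 ≤ a i)
    (hb0 : ∀ j, 0 ≤ b j) (h : ∀ c ≠ 0, #{i | a i = c} = #{j | b j = c}) {i : Fin p}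
    {j : Fin q} (hij : (i : ℕ) = j) : a i = b j := by
  have hlt : ∀ t, 0 ≤ t → #{i | t < a i} = #{j | t < b j} := fun t ht =>
    card_filter_lt_eq_of_card_filter_eq fun c htc => h c (ht.trans_lt htc).ne'
  exact (ha.apply_le_of_card_filter_lt_eq hb hlt hij (hb0 j)).antisymm
    (hb.apply_le_of_card_filter_lt_eq ha (fun t ht => (hlt t ht).symm) hij.symm (ha0 i))

end SortedSequences

theorem Matrix.card_filter_eigenvalues_mul_comm {K m n ι κ : Type*} [Field K] [DecidableEq K]
    [Fintype m] [DecidableEq m] [Fintype n] [DecidableEq n] [Fintype ι] [Fintype κ]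
    (A : Matrix m n K) (B : Matrix n m K) {a : ι → K} {b : κ → K} (ba : Basis ι K (m → K))
    (hba : ∀ i, (A * B) *ᵥ ba i = a i • ba i) (bb : Basis κ K (n → K))
    (hbb : ∀ j, (B * A) *ᵥ bb j = b j • bb j) {c : K} (hc : c ≠ 0) :
    #{i | a i = c} = #{j | b j = c} := by
  rw [← Module.End.finrank_eigenspace_eq_card_filter ba (f := toLin' (A * B)) hba,
    ← Module.End.finrank_eigenspace_eq_card_filter bb (f := toLin' (B * A)) hbb,
    toLin'_mul, toLin'_mul]
  exact Module.End.finrank_eigenspace_comp_comm _ _ hc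

theorem Matrix.IsHermitian.exists_orthonormalBasis_mulVec_eq {𝕜 n : Type*} [RCLike 𝕜]
    [Fintype n] [DecidableEq n] {A : Matrix n n 𝕜} (hA : A.IsHermitian) {a : n → ℝ}
    (ha : ∃ σ : Equiv.Perm n, a = hA.eigenvalues ∘ σ) :
    ∃ b : OrthonormalBasis n 𝕜 (EuclideanSpace 𝕜 n), ∀ i, A *ᵥ ⇑(b i) = a i • ⇑(b i) := by
  obtain ⟨σ, rfl⟩ := ha
  exact ⟨hA.eigenvectorBasis.reindex σ.symm, fun i => by
    simpa using hA.mulVec_eigenvectorBasis (σ i)⟩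

theorem Matrix.eigenvalues_smul_mul_transpose_eq {p q : ℕ} (Y : Matrix (Fin p) (Fin q) ℝ)
    {r : ℝ} (hr : 0 ≤ r) (hS : (r • (Y * Yᵀ)).IsHermitian) {lam : Fin p → ℝ}
    (hlam : ∃ σ : Equiv.Perm (Fin p), lam = hS.eigenvalues ∘ σ) (hanti : Antitone lam)
    (hYY : (Yᵀ * Y).IsHermitian) {mu : Fin q → ℝ}
    (hmu : ∃ σ : Equiv.Perm (Fin q), mu = hYY.eigenvalues ∘ σ) (hmuanti : Antitone mu)
    {i : Fin p} {j : Fin q} (hij : (i : ℕ) = j) : lam i = r * mu j := by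
  have hSpsd : (r • (Y * Yᵀ)).PosSemidef := by
    simpa [conjTranspose_eq_transpose_of_trivial] using
      (posSemidef_self_mul_conjTranspose Y).smul hr
  have hYYpsd : (Yᵀ * Y).PosSemidef := by
    simpa [conjTranspose_eq_transpose_of_trivial] using posSemidef_conjTranspose_mul_self Y
  obtain ⟨C, hC⟩ := hS.exists_orthonormalBasis_mulVec_eq hlam
  obtain ⟨D, hD⟩ := hYY.exists_orthonormalBasis_mulVec_eq hmu
  refine hanti.apply_eq_of_card_filter_eq (hmuanti.const_mul hr) ?_ ?_ (fun c hc => ?_) hij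
  · obtain ⟨σ, rfl⟩ := hlam
    exact fun i => hSpsd.eigenvalues_nonneg (σ i)
  · obtain ⟨σ, rfl⟩ := hmu
    exact fun j => mul_nonneg hr (hYYpsd.eigenvalues_nonneg (σ j))
  · refine card_filter_eigenvalues_mul_comm (r • Y) Yᵀ
      (C.toBasis.map (WithLp.linearEquiv 2 ℝ _)) (fun i => ?_)
      (D.toBasis.map (WithLp.linearEquiv 2 ℝ _)) (fun j => ?_) hc
    · simpa [smul_mul] using hC i
    · simpa [Matrix.mul_smul, smul_mulVec, smul_smul] using congr_arg (r • ·) (hD j)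

open Module.End in
theorem LinearMap.IsSymmetric.exists_orthonormalBasis_eigen_extension
    {𝕜 E ι κ : Type*} [RCLike 𝕜] [NormedAddCommGroup E] [InnerProductSpace 𝕜 E]
    [FiniteDimensional 𝕜 E] [Fintype ι] {f : E →ₗ[𝕜] E} (hf : f.IsSymmetric) {d : ι → 𝕜}
    (B : OrthonormalBasis ι 𝕜 E) (hB : ∀ i, f (B i) = d i • B i) {e : κ → ι}
    (he : Function.Injective e) {u : κ → E} (hu : Orthonormal 𝕜 u)
    (hue : ∀ k, f (u k) = d (e k) • u k) :
    ∃ b : OrthonormalBasis ι 𝕜 E, (∀ i, f (b i) = d i • b i) ∧ ∀ k, b (e k) = u k := by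
  classical
  -- In each eigenspace, extend the vectors of `u` lying there to an orthonormal basis indexed
  -- by the fibre of `d`; the projection only serves to land in the eigenspace, since `v` agrees
  -- with `u` on the range of `e`.
  have hfibre : ∀ c : 𝕜, ∃ bc : OrthonormalBasis {i // d i = c} 𝕜 (eigenspace f c),
      ∀ k (hk : d (e k) = c), (bc ⟨e k, hk⟩ : E) = u k := by
    intro c
    let v : {i // d i = c} → eigenspace f c := fun i =>
      (eigenspace f c).orthogonalProjectionOnto (Function.extend e u 0 i)
    have hv : ∀ k (hk : d (e k) = c), (v ⟨e k, hk⟩ : E) = u k := by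
      intro k hk
      simp only [v, coe_orthogonalProjectionOnto_apply, he.extend_apply]
      exact starProjection_eq_self_iff.2 (mem_eigenspace_iff.2 (hk ▸ hue k))
    have hvo : Orthonormal 𝕜 ({i | i.1 ∈ Set.range e}.domRestrict v) := by
      rw [orthonormal_iff_ite]
      rintro ⟨⟨i, hi⟩, hik⟩ ⟨⟨j, hj⟩, hjl⟩
      obtain ⟨k, rfl⟩ : ∃ k, e k = i := hik
      obtain ⟨l, rfl⟩ : ∃ l, e l = j := hjl
      simp only [Set.domRestrict_apply, coe_inner, hv, orthonormal_iff_ite.1 hu, Subtype.ext_iff,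
        he.eq_iff]
    have hcard : finrank 𝕜 (eigenspace f c) = Fintype.card {i // d i = c} := by
      rw [finrank_eigenspace_eq_card_filter B.toBasis (by simpa using hB), Fintype.card_subtype]
    obtain ⟨bc, hbc⟩ := hvo.exists_orthonormalBasis_extension_of_card_eq hcard
    exact ⟨bc, fun k hk => by rw [hbc _ ⟨k, rfl⟩, hv]⟩
  choose bc hbc using hfibre
  let ξ : ι → E := fun i => bc (d i) ⟨i, rfl⟩
  have hξ : ∀ i c (h : d i = c), ξ i = bc c ⟨i, h⟩ := by
    rintro i c rfl
    rfl
  have hξo : Orthonormal 𝕜 ξ := by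
    rw [orthonormal_iff_ite]
    intro i j
    by_cases hd : d i = d j
    · rw [hξ i (d j) hd, hξ j (d j) rfl, ← coe_inner, orthonormal_iff_ite.1 (bc (d j)).orthonormal]
      simp only [Subtype.ext_iff]
    · rw [if_neg (fun h => hd (congrArg d h))]
      exact hf.orthogonalFamily_eigenspaces hd (bc (d i) ⟨i, rfl⟩) (bc (d j) ⟨j, rfl⟩)
  have hspan : ⊤ ≤ span 𝕜 (Set.range ξ) :=
    (hξo.linearIndependent.span_eq_top_of_card_eq_finrank'
      (finrank_eq_card_basis B.toBasis).symm).ge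
  refine ⟨OrthonormalBasis.mk hξo hspan, fun i => ?_, fun k => ?_⟩
  · rw [OrthonormalBasis.coe_mk]
    exact mem_eigenspace_iff.1 (bc (d i) ⟨i, rfl⟩).2
  · rw [OrthonormalBasis.coe_mk, hξ (e k) _ rfl, hbc]

theorem Matrix.toEuclideanLin_apply_eq_smul_iff {𝕜 n : Type*} [RCLike 𝕜] [Fintype n]
    [DecidableEq n] {A : Matrix n n 𝕜} {x : EuclideanSpace 𝕜 n} {c : 𝕜} :
    toEuclideanLin A x = c • x ↔ A *ᵥ ⇑x = c • ⇑x := by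
  rw [toLpLin_apply, ← (WithLp.ofLp_injective 2).eq_iff]
  simp

theorem Matrix.eq_sum_smul_vecMulVec_of_mulVec_eq {n ι : Type*} [Fintype n] [DecidableEq n]
    [Fintype ι] {A : Matrix n n ℝ} {d : ι → ℝ} (b : OrthonormalBasis ι ℝ (EuclideanSpace ℝ n))
    (hb : ∀ i, A *ᵥ ⇑(b i) = d i • ⇑(b i)) :
    A = ∑ i, d i • vecMulVec ⇑(b i) ⇑(b i) := by
  refine toLin'.injective (LinearMap.ext fun x => ?_)
  have hx := congr_arg WithLp.ofLp (b.sum_repr' (WithLp.toLp 2 x))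
  simp only [WithLp.ofLp_sum, WithLp.ofLp_smul, EuclideanSpace.inner_eq_star_dotProduct] at hx
  conv_lhs => rw [toLin'_apply, ← hx]
  simp [mulVec_sum, mulVec_smul, hb, vecMulVec_mulVec, smul_smul, mul_comm, dotProduct_comm]

section Factors

variable {m n ι : Type*} [Fintype n] (Y : Matrix m n ℝ)

theorem Matrix.mul_transpose_mulVec_mulVec_of_mulVec_eq [Fintype m] {v : n → ℝ} {μ : ℝ}
    (hv : (Yᵀ * Y) *ᵥ v = μ • v) : (Y * Yᵀ) *ᵥ (Y *ᵥ v) = μ • (Y *ᵥ v) := by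
  rw [mulVec_mulVec, Matrix.mul_assoc, ← mulVec_mulVec, hv, mulVec_smul]

theorem Matrix.mulVec_dotProduct_mulVec_of_mulVec_eq [Fintype m] {v : n → ℝ} {μ : ℝ}
    (hv : (Yᵀ * Y) *ᵥ v = μ • v) (w : n → ℝ) : (Y *ᵥ w) ⬝ᵥ (Y *ᵥ v) = μ * (w ⬝ᵥ v) := by
  rw [← vecMul_transpose, ← dotProduct_mulVec, mulVec_mulVec, hv, dotProduct_smul, smul_eq_mul]

theorem Matrix.orthonormal_inv_sqrt_smul_mulVec [Fintype m] [DecidableEq ι] {v : ι → n → ℝ}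
    (hv : ∀ i j, v i ⬝ᵥ v j = if i = j then 1 else 0) {μ : ι → ℝ}
    (heig : ∀ i, (Yᵀ * Y) *ᵥ v i = μ i • v i) :
    Orthonormal ℝ fun i : {i // μ i ≠ 0} => WithLp.toLp 2 ((√(μ i))⁻¹ • (Y *ᵥ v i)) := by
  rw [orthonormal_iff_ite]
  rintro ⟨i, hi⟩ ⟨j, hj⟩
  have hμ : 0 < μ i := by
    have hii := mulVec_dotProduct_mulVec_of_mulVec_eq Y (heig i) (v i)
    rw [hv, if_pos rfl, mul_one] at hii
    exact lt_of_le_of_ne (hii ▸ Finset.sum_nonneg fun t _ => mul_self_nonneg _) (Ne.symm hi)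
  simp only [EuclideanSpace.inner_toLp_toLp, star_trivial, smul_dotProduct, dotProduct_smul,
    mulVec_dotProduct_mulVec_of_mulVec_eq Y (heig i), hv, Subtype.mk.injEq, smul_eq_mul]
  by_cases hij : i = j
  · subst hij
    field_simp
    rw [Real.sq_sqrt hμ.le]
  · simp [hij, Ne.symm hij]

theorem Matrix.loadings_mul_transpose_eq_sum [Fintype ι] (v : ι → n → ℝ) {c : ℝ} (hc : 0 ≤ c) :
    (c⁻¹ • (Y * of fun t k => √c * v k t)) * (c⁻¹ • (Y * of fun t k => √c * v k t))ᵀ =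
      c⁻¹ • ∑ k, vecMulVec (Y *ᵥ v k) (Y *ᵥ v k) := by
  have hcol : ∀ a k, (c⁻¹ • (Y * of fun t k => √c * v k t)) a k = c⁻¹ * √c * (Y *ᵥ v k) a := by
    intro a k
    simp only [smul_apply, mul_apply, of_apply, mulVec, dotProduct, smul_eq_mul, Finset.mul_sum]
    exact Finset.sum_congr rfl fun t _ => by ring
  have hscale : c⁻¹ * √c * (c⁻¹ * √c) = c⁻¹ := by
    rcases eq_or_ne c 0 with rfl | hc0
    · simp
    · rw [mul_mul_mul_comm, Real.mul_self_sqrt hc, mul_assoc, inv_mul_cancel₀ hc0, mul_one]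
  ext a b
  simp only [mul_apply, transpose_apply, hcol, smul_apply, Matrix.sum_apply, vecMulVec_apply,
    smul_eq_mul, Finset.mul_sum]
  exact Finset.sum_congr rfl fun k _ => by
    linear_combination (Y *ᵥ v k) a * (Y *ᵥ v k) b * hscale

end Factors

theorem Matrix.vecMulVec_self_eq_smul_of_dotProduct_self {n : Type*} [Fintype n] {w x : n → ℝ}
    {μ : ℝ} (hw : w ⬝ᵥ w = μ) (hx : μ ≠ 0 → x = (√μ)⁻¹ • w) :
    vecMulVec w w = μ • vecMulVec x x := by
  by_cases hμ : μ = 0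
  · rw [hμ, dotProduct_self_eq_zero] at hw
    rw [hw, hμ, vecMulVec_zero, zero_smul]
  · have hμ0 : 0 ≤ μ := hw ▸ Finset.sum_nonneg fun t _ => mul_self_nonneg (w t)
    rw [hx hμ, smul_vecMulVec, vecMulVec_smul, smul_smul, smul_smul, mul_assoc, ← mul_inv,
      Real.mul_self_sqrt hμ0, mul_inv_cancel₀ hμ, one_smul]

theorem Fin.sum_filter_val_lt_eq_sum_castLE {M : Type*} [AddCommMonoid M] {K p : ℕ} (h : K ≤ p)
    (f : Fin p → M) :
    ∑ i ∈ univ.filter (fun i : Fin p => (i : ℕ) < K), f i = ∑ k : Fin K, f (Fin.castLE h k) := by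
  refine (Finset.sum_congr ?_ fun _ _ => rfl).trans (Finset.sum_map univ (Fin.castLEEmb h) f)
  ext i
  simpa using ⟨fun hi => ⟨⟨i, hi⟩, rfl⟩, by rintro ⟨k, rfl⟩; exact k.2⟩

theorem Matrix.exists_orthonormalBasis_mulVec_eq_of_right_eigenvectors {m n ι κ : Type*}
    [Fintype m] [DecidableEq m] [Fintype n] [Fintype ι] [DecidableEq κ] (Y : Matrix m n ℝ)
    {r : ℝ} {d : ι → ℝ} (C : OrthonormalBasis ι ℝ (EuclideanSpace ℝ m))
    (hC : ∀ i, (r • (Y * Yᵀ)) *ᵥ ⇑(C i) = d i • ⇑(C i)) {e : κ → ι}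
    (he : Function.Injective e) {v : κ → n → ℝ}
    (hv : ∀ k l, v k ⬝ᵥ v l = if k = l then 1 else 0) {μ : κ → ℝ}
    (heig : ∀ k, (Yᵀ * Y) *ᵥ v k = μ k • v k) (hd : ∀ k, d (e k) = r * μ k) :
    ∃ b : OrthonormalBasis ι ℝ (EuclideanSpace ℝ m),
      (∀ i, (r • (Y * Yᵀ)) *ᵥ ⇑(b i) = d i • ⇑(b i)) ∧
      ∀ k, r • vecMulVec (Y *ᵥ v k) (Y *ᵥ v k) = d (e k) • vecMulVec ⇑(b (e k)) ⇑(b (e k)) := by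
  have hS : (r • (Y * Yᵀ)).IsHermitian := by
    simpa [conjTranspose_eq_transpose_of_trivial] using
      (isHermitian_mul_conjTranspose_self Y).smul (IsSelfAdjoint.all r)
  have hYv (k : κ) : (r • (Y * Yᵀ)) *ᵥ (Y *ᵥ v k) = d (e k) • (Y *ᵥ v k) := by
    rw [smul_mulVec, mul_transpose_mulVec_mulVec_of_mulVec_eq Y (heig k), smul_smul, hd]
  -- `Y *ᵥ v k` vanishes when `μ k = 0`, so only the other factors are normalized and placed
  -- in the basis.
  obtain ⟨b, hb, hbu⟩ :=
    (isSymmetric_toEuclideanLin_iff.2 hS).exists_orthonormalBasis_eigen_extension C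
      (fun i => toEuclideanLin_apply_eq_smul_iff.2 (hC i))
      (e := fun k : {k // μ k ≠ 0} => e k) (he.comp Subtype.val_injective)
      (orthonormal_inv_sqrt_smul_mulVec Y hv heig)
      (fun k => toEuclideanLin_apply_eq_smul_iff.2 (by
        rw [WithLp.ofLp_toLp, mulVec_smul, hYv, smul_comm]))
  refine ⟨b, fun i => toEuclideanLin_apply_eq_smul_iff.1 (hb i), fun k => ?_⟩
  have hnorm : (Y *ᵥ v k) ⬝ᵥ (Y *ᵥ v k) = μ k := by
    rw [mulVec_dotProduct_mulVec_of_mulVec_eq Y (heig k), hv, if_pos rfl, mul_one]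
  rw [vecMulVec_self_eq_smul_of_dotProduct_self (x := b (e k)) hnorm
    (fun hk => by rw [hbu ⟨k, hk⟩, WithLp.ofLp_toLp]), smul_smul, hd]

theorem stmt2_general (p T K : ℕ)
    (hKp : K ≤ p) (hKT : K ≤ T)
    (Y : Matrix (Fin p) (Fin T) ℝ)
    (S : Matrix (Fin p) (Fin p) ℝ) (hSdef : S = (T : ℝ)⁻¹ • (Y * Yᵀ))
    (hS : S.IsHermitian)
    (lamhat : Fin p → ℝ)
    (hlam : ∃ σ : Equiv.Perm (Fin p), lamhat = hS.eigenvalues ∘ σ)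
    (hanti : Antitone lamhat)
    (hYY : (Yᵀ * Y).IsHermitian)
    (mu : Fin T → ℝ)
    (hmu : ∃ σ : Equiv.Perm (Fin T), mu = hYY.eigenvalues ∘ σ)
    (hmuanti : Antitone mu)
    (v : Fin K → (Fin T → ℝ))
    (hortho : ∀ i j : Fin K, (∑ t, v i t * v j t) = if i = j then 1 else 0)
    (heig : ∀ i : Fin K, (Yᵀ * Y) *ᵥ v i = mu (Fin.castLE hKT i) • v i)
    (Fhat : Matrix (Fin T) (Fin K) ℝ)
    (hF : Fhat = Matrix.of fun t i => Real.sqrt T * v i t)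
    (Lam : Matrix (Fin p) (Fin K) ℝ) (hLam : Lam = (T : ℝ)⁻¹ • (Y * Fhat)) :
    ∃ ξ : Fin p → (Fin p → ℝ),
      (∀ i j : Fin p, (∑ a, ξ i a * ξ j a) = if i = j then 1 else 0) ∧
      (∀ i : Fin p, S *ᵥ ξ i = lamhat i • ξ i) ∧
      Lam * Lamᵀ
        = ∑ i ∈ Finset.univ.filter (fun i : Fin p => (i : ℕ) < K),
            lamhat i • Matrix.vecMulVec (ξ i) (ξ i) ∧
      S - Lam * Lamᵀ
        = ∑ i ∈ Finset.univ.filter (fun i : Fin p => K ≤ (i : ℕ)),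
            lamhat i • Matrix.vecMulVec (ξ i) (ξ i) := by
  subst hSdef
  have hkey (k : Fin K) : lamhat (Fin.castLE hKp k) = (T : ℝ)⁻¹ * mu (Fin.castLE hKT k) :=
    eigenvalues_smul_mul_transpose_eq Y (by positivity) hS hlam hanti hYY hmu hmuanti rfl
  obtain ⟨C, hC⟩ := hS.exists_orthonormalBasis_mulVec_eq hlam
  obtain ⟨b, hbS, hterm⟩ := exists_orthonormalBasis_mulVec_eq_of_right_eigenvectors Y C hC
    (Fin.castLE_injective hKp) hortho heig hkey
  have hfactor : Lam * Lamᵀ = ∑ i ∈ univ.filter (fun i : Fin p => (i : ℕ) < K),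
      lamhat i • vecMulVec (b i) (b i) := by
    rw [hLam, hF, loadings_mul_transpose_eq_sum Y v (Nat.cast_nonneg T),
      Fin.sum_filter_val_lt_eq_sum_castLE hKp, smul_sum]
    exact sum_congr rfl fun k _ => hterm k
  refine ⟨fun i => b i, fun i j => ?_, hbS, hfactor, ?_⟩
  · simpa [EuclideanSpace.inner_eq_star_dotProduct, dotProduct, mul_comm] using
      orthonormal_iff_ite.1 b.orthonormal i j
  · rw [eq_sum_smul_vecMulVec_of_mulVec_eq b hbS,
      ← sum_filter_add_sum_filter_not univ (fun i : Fin p => (i : ℕ) < K), hfactor,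
      add_sub_cancel_left]
    simp only [not_lt]

/-- **Theorem 2.1** (equivalence of PCA and constrained least squares).
Let `S = T⁻¹ Y Yᵀ` with eigenvalues `lamhat` in nonincreasing order.  Let
`v 0, …, v (K-1)` be orthonormal eigenvectors of `Yᵀ Y` associated with its `K`
largest eigenvalues `mu 0 ≥ … ≥ mu (K-1)` (where `mu` lists the eigenvalues of
`Yᵀ Y` in nonincreasing order), let `F̂` have columns `√T · v i`, and let
`Λ̂ = T⁻¹ Y F̂`.  Then there is an orthonormal eigenbasis `ξ` of `S` with
eigenvalues `lamhat` such that `Λ̂ Λ̂ᵀ = ∑_{i<K} lamhat i • ξ_i ξ_iᵀ` and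
`S − Λ̂ Λ̂ᵀ = ∑_{i≥K} lamhat i • ξ_i ξ_iᵀ`. -/
theorem stmt2 (p T K : ℕ) (hp : 0 < p) (hT : 0 < T) (hK : 0 < K)
    (hKp : K ≤ p) (hKT : K ≤ T)
    (Y : Matrix (Fin p) (Fin T) ℝ)
    (S : Matrix (Fin p) (Fin p) ℝ) (hSdef : S = (T : ℝ)⁻¹ • (Y * Yᵀ))
    (hS : S.IsHermitian)
    (lamhat : Fin p → ℝ)
    (hlam : ∃ σ : Equiv.Perm (Fin p), lamhat = hS.eigenvalues ∘ σ)
    (hanti : Antitone lamhat)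
    (hYY : (Yᵀ * Y).IsHermitian)
    (mu : Fin T → ℝ)
    (hmu : ∃ σ : Equiv.Perm (Fin T), mu = hYY.eigenvalues ∘ σ)
    (hmuanti : Antitone mu)
    (v : Fin K → (Fin T → ℝ))
    (hortho : ∀ i j : Fin K, (∑ t, v i t * v j t) = if i = j then 1 else 0)
    (heig : ∀ i : Fin K, (Yᵀ * Y) *ᵥ v i = mu (Fin.castLE hKT i) • v i)
    (Fhat : Matrix (Fin T) (Fin K) ℝ)
    (hF : Fhat = Matrix.of fun t i => Real.sqrt T * v i t)
    (Lam : Matrix (Fin p) (Fin K) ℝ) (hLam : Lam = (T : ℝ)⁻¹ • (Y * Fhat)) :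
    ∃ ξ : Fin p → (Fin p → ℝ),
      (∀ i j : Fin p, (∑ a, ξ i a * ξ j a) = if i = j then 1 else 0) ∧
      (∀ i : Fin p, S *ᵥ ξ i = lamhat i • ξ i) ∧
      Lam * Lamᵀ
        = ∑ i ∈ Finset.univ.filter (fun i : Fin p => (i : ℕ) < K),
            lamhat i • Matrix.vecMulVec (ξ i) (ξ i) ∧
      S - Lam * Lamᵀ
        = ∑ i ∈ Finset.univ.filter (fun i : Fin p => K ≤ (i : ℕ)),
            lamhat i • Matrix.vecMulVec (ξ i) (ξ i) :=
  stmt2_general p T K hKp hKT Y S hSdef hS lamhat hlam hanti hYY mu hmu hmuanti v hortho heig Fhat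
    hF Lam hLam
end

section
/- Let Z₁ and Z₂ be real-valued random variables on a probability space such that there exist r₁, r₂ ∈ (0,1) and b₁, b₂ > 0 with P(|Z₁| > s) ≤ exp(−(s/b₁)^{r₁}) and P(|Z₂| > s) ≤ exp(−(s/b₂)^{r₂}) for every s > 0. Then there exist r₃ ∈ (0,1) and b₃ > 0 such that for every s > 0, P(|Z₁ Z₂| > s) ≤ exp(1 − (s/b₃)^{r₃}). -/
open MeasureTheory

/-- **Lemma A.2** (products of variables with exponential-type tails).  If `Z₁, Z₂`
satisfy `P(|Zᵢ| > s) ≤ exp(−(s/bᵢ)^{rᵢ})` for all `s > 0` with `rᵢ ∈ (0,1)` and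
`bᵢ > 0`, then there are `r₃ ∈ (0,1)` and `b₃ > 0` with
`P(|Z₁ Z₂| > s) ≤ exp(1 − (s/b₃)^{r₃})` for all `s > 0`.  No independence is assumed. -/
theorem stmt5 {Ω : Type*} [MeasurableSpace Ω] (μ : Measure Ω) [IsProbabilityMeasure μ]
    (Z₁ Z₂ : Ω → ℝ) (r₁ r₂ : ℝ)
    (hr₁ : r₁ ∈ Set.Ioo (0 : ℝ) 1) (hr₂ : r₂ ∈ Set.Ioo (0 : ℝ) 1)
    (b₁ b₂ : ℝ) (hb₁ : 0 < b₁) (hb₂ : 0 < b₂)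
    (h₁ : ∀ s : ℝ, 0 < s →
      μ {ω | s < |Z₁ ω|} ≤ ENNReal.ofReal (Real.exp (-(s / b₁) ^ r₁)))
    (h₂ : ∀ s : ℝ, 0 < s →
      μ {ω | s < |Z₂ ω|} ≤ ENNReal.ofReal (Real.exp (-(s / b₂) ^ r₂))) :
    ∃ r₃ ∈ Set.Ioo (0 : ℝ) 1, ∃ b₃ : ℝ, 0 < b₃ ∧
      ∀ s : ℝ, 0 < s →
        μ {ω | s < |Z₁ ω * Z₂ ω|} ≤ ENNReal.ofReal (Real.exp (1 - (s / b₃) ^ r₃)) := by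
  obtain ⟨hr₁0, hr₁1⟩ := hr₁
  obtain ⟨hr₂0, hr₂1⟩ := hr₂
  set r : ℝ := min r₁ r₂ with hr
  have hr0 : 0 < r := lt_min hr₁0 hr₂0
  have hr1 : r < 1 := lt_of_le_of_lt (min_le_left _ _) hr₁1
  refine ⟨r / 2, ⟨by linarith, by linarith⟩, b₁ * b₂, mul_pos hb₁ hb₂, ?_⟩
  intro s hs
  set x : ℝ := s / (b₁ * b₂) with hx
  have hx0 : 0 < x := div_pos hs (mul_pos hb₁ hb₂)
  set u : ℝ := x ^ ((1 : ℝ) / 2) with hu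
  have hu0 : 0 < u := Real.rpow_pos_of_pos hx0 _
  have huu : u * u = x := by
    rw [hu, ← Real.rpow_add hx0]
    norm_num
  have hur : u ^ r = x ^ (r / 2) := by
    rw [hu, ← Real.rpow_mul hx0.le]
    congr 1
    ring
  set t : ℝ := b₁ * u with ht
  have ht0 : 0 < t := mul_pos hb₁ hu0
  have hst : s / t = b₂ * u := by
    field_simp [ht]
    rw [hx] at huu
    field_simp at huu
    linarith [huu]
  -- set inclusion
  have hsub : {ω | s < |Z₁ ω * Z₂ ω|} ⊆ {ω | t < |Z₁ ω|} ∪ {ω | s / t < |Z₂ ω|} := by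
    intro ω hω
    by_contra hc
    simp only [Set.mem_union, Set.mem_setOf_eq, not_or, not_lt] at hc
    obtain ⟨h1, h2⟩ := hc
    have : |Z₁ ω * Z₂ ω| ≤ t * (s / t) := by
      rw [abs_mul]
      exact mul_le_mul h1 h2 (abs_nonneg _) ht0.le
    rw [mul_div_cancel₀ _ ht0.ne'] at this
    exact absurd hω (not_lt.mpr this)
  have hb1 : μ {ω | t < |Z₁ ω|} ≤ ENNReal.ofReal (Real.exp (-u ^ r₁)) := by
    have htb : t / b₁ = u := by rw [ht]; field_simp
    have := h₁ t ht0
    rwa [htb] at this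
  have hb2 : μ {ω | s / t < |Z₂ ω|} ≤ ENNReal.ofReal (Real.exp (-u ^ r₂)) := by
    have htb : s / t / b₂ = u := by rw [hst]; field_simp
    have := h₂ (s / t) (div_pos hs ht0)
    rwa [htb] at this
  by_cases hu1 : 1 ≤ u
  · calc μ {ω | s < |Z₁ ω * Z₂ ω|}
        ≤ μ ({ω | t < |Z₁ ω|} ∪ {ω | s / t < |Z₂ ω|}) := measure_mono hsub
      _ ≤ μ {ω | t < |Z₁ ω|} + μ {ω | s / t < |Z₂ ω|} := measure_union_le _ _
      _ ≤ ENNReal.ofReal (Real.exp (-u ^ r₁)) + ENNReal.ofReal (Real.exp (-u ^ r₂)) :=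
          add_le_add hb1 hb2
      _ = ENNReal.ofReal (Real.exp (-u ^ r₁) + Real.exp (-u ^ r₂)) :=
          (ENNReal.ofReal_add (Real.exp_nonneg _) (Real.exp_nonneg _)).symm
      _ ≤ ENNReal.ofReal (Real.exp (1 - (s / (b₁ * b₂)) ^ (r / 2))) := by
          apply ENNReal.ofReal_le_ofReal
          have hx1 : u ^ r₁ ≥ u ^ r :=
            Real.rpow_le_rpow_of_exponent_le hu1 (min_le_left _ _)
          have hx2 : u ^ r₂ ≥ u ^ r :=
            Real.rpow_le_rpow_of_exponent_le hu1 (min_le_right _ _)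
          have e1 : Real.exp (-u ^ r₁) ≤ Real.exp (-u ^ r) := Real.exp_le_exp.mpr (by linarith)
          have e2 : Real.exp (-u ^ r₂) ≤ Real.exp (-u ^ r) := Real.exp_le_exp.mpr (by linarith)
          have : Real.exp (-u ^ r₁) + Real.exp (-u ^ r₂) ≤ 2 * Real.exp (-u ^ r) := by linarith
          refine this.trans ?_
          have h2e : (2 : ℝ) ≤ Real.exp 1 := by
            have := Real.add_one_le_exp (1 : ℝ)
            linarith
          calc 2 * Real.exp (-u ^ r) ≤ Real.exp 1 * Real.exp (-u ^ r) := by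
                apply mul_le_mul_of_nonneg_right h2e (Real.exp_nonneg _)
            _ = Real.exp (1 - u ^ r) := by rw [← Real.exp_add]; ring_nf
            _ = Real.exp (1 - (s / (b₁ * b₂)) ^ (r / 2)) := by rw [hur, hx]
  · push_neg at hu1
    have hxlt : x ^ (r / 2) < 1 := by
      rw [← hur]
      exact Real.rpow_lt_one hu0.le hu1 (by linarith)
    calc μ {ω | s < |Z₁ ω * Z₂ ω|} ≤ 1 := prob_le_one
      _ ≤ ENNReal.ofReal (Real.exp (1 - (s / (b₁ * b₂)) ^ (r / 2))) := by
          rw [← hx]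
          rw [show (1 : ENNReal) = ENNReal.ofReal 1 by simp]
          apply ENNReal.ofReal_le_ofReal
          have : 0 < 1 - x ^ (r / 2) := by linarith
          nlinarith [Real.add_one_le_exp (1 - x ^ (r / 2))]
end

section
/- Let Σ_u = (σ_{ij}) be a real symmetric positive semidefinite p×p matrix and let q ∈ [0,1]. Then ‖Σ_u‖ ≤ ‖Σ_u‖₁ ≤ max_{i ≤ p} Σ_{j=1}^{p} |σ_{ij}|^q (σ_{ii} σ_{jj})^{(1−q)/2}. -/
/-!
The first inequality is the Schur test `‖A‖² ≤ (max row sum) · (max column sum)`, whose two factors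
coincide for a symmetric matrix. For the second, the `2 × 2` principal minors of a positive
semidefinite matrix are nonnegative, so `σᵢⱼ² ≤ σᵢᵢ σⱼⱼ`, and entrywise
`|σᵢⱼ| = |σᵢⱼ|^q |σᵢⱼ|^(1-q) ≤ |σᵢⱼ|^q (σᵢᵢ σⱼⱼ)^((1-q)/2)`.
-/

open Matrix BigOperators

open Finset

section SchurTest

variable {𝕜 : Type*} [RCLike 𝕜] {m n : Type*} [Fintype n]

theorem Matrix.norm_mulVec_apply_sq_le (A : Matrix m n 𝕜) (x : n → 𝕜) (i : m) :
    ‖(A *ᵥ x) i‖ ^ 2 ≤ (∑ j, ‖A i j‖) * ∑ j, ‖A i j‖ * ‖x j‖ ^ 2 := by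
  have htriangle : ‖(A *ᵥ x) i‖ ≤ ∑ j, ‖A i j‖ * ‖x j‖ := by
    simpa only [mulVec, dotProduct, norm_mul] using norm_sum_le univ fun j => A i j * x j
  calc ‖(A *ᵥ x) i‖ ^ 2 ≤ (∑ j, ‖A i j‖ * ‖x j‖) ^ 2 := by gcongr
    _ ≤ _ := sum_sq_le_sum_mul_sum_of_sq_le_mul _ (fun j _ => norm_nonneg _)
        (fun j _ => by positivity) (fun j _ => le_of_eq (by ring))

theorem Matrix.sum_norm_mulVec_sq_le [Fintype m] (A : Matrix m n 𝕜) (x : n → 𝕜) {R C : ℝ}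
    (hR0 : 0 ≤ R) (hR : ∀ i, ∑ j, ‖A i j‖ ≤ R) (hC : ∀ j, ∑ i, ‖A i j‖ ≤ C) :
    ∑ i, ‖(A *ᵥ x) i‖ ^ 2 ≤ R * C * ∑ j, ‖x j‖ ^ 2 :=
  calc ∑ i, ‖(A *ᵥ x) i‖ ^ 2 ≤ ∑ i, R * ∑ j, ‖A i j‖ * ‖x j‖ ^ 2 :=
        sum_le_sum fun i _ => (A.norm_mulVec_apply_sq_le x i).trans (by gcongr; exact hR i)
    _ = R * ∑ j, (∑ i, ‖A i j‖) * ‖x j‖ ^ 2 := by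
        rw [← mul_sum, sum_comm]
        simp_rw [sum_mul]
    _ ≤ R * ∑ j, C * ‖x j‖ ^ 2 := by gcongr with j; exact hC j
    _ = R * C * ∑ j, ‖x j‖ ^ 2 := by rw [← mul_sum, mul_assoc]

theorem Matrix.norm_toEuclideanCLM_le_sqrt [DecidableEq n] (A : Matrix n n 𝕜) {R C : ℝ}
    (hR0 : 0 ≤ R) (hR : ∀ i, ∑ j, ‖A i j‖ ≤ R) (hC : ∀ j, ∑ i, ‖A i j‖ ≤ C) :
    ‖toEuclideanCLM (𝕜 := 𝕜) A‖ ≤ √(R * C) := by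
  refine ContinuousLinearMap.opNorm_le_bound _ (Real.sqrt_nonneg _) fun x => ?_
  rw [EuclideanSpace.norm_eq, EuclideanSpace.norm_eq, ← Real.sqrt_mul' _ (by positivity),
    ofLp_toEuclideanCLM]
  exact Real.sqrt_le_sqrt (A.sum_norm_mulVec_sq_le _ hR0 hR hC)

theorem Matrix.IsHermitian.norm_toEuclideanCLM_le_iSup_sum_norm [DecidableEq n]
    {A : Matrix n n 𝕜} (hA : A.IsHermitian) :
    ‖toEuclideanCLM (𝕜 := 𝕜) A‖ ≤ ⨆ j, ∑ i, ‖A i j‖ := by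
  set M := ⨆ j, ∑ i, ‖A i j‖
  have hC : ∀ j, ∑ i, ‖A i j‖ ≤ M := le_ciSup (Finite.bddAbove_range _)
  have hR : ∀ i, ∑ j, ‖A i j‖ ≤ M := fun i =>
    (sum_congr rfl fun j _ => by rw [← hA.apply i j, norm_star]).trans_le (hC i)
  have hM0 : 0 ≤ M := Real.iSup_nonneg fun j => by positivity
  simpa only [Real.sqrt_mul_self hM0] using A.norm_toEuclideanCLM_le_sqrt hM0 hR hC

end SchurTest

theorem le_rpow_mul_rpow_of_sq_le {a d q : ℝ} (ha : 0 ≤ a) (had : a ^ 2 ≤ d) (hq : q ≤ 1) :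
    a ≤ a ^ q * d ^ ((1 - q) / 2) := by
  have hd : 0 ≤ d := (sq_nonneg a).trans had
  calc a = a ^ q * a ^ (1 - q) := by
        rw [← Real.rpow_add' ha (by norm_num), add_sub_cancel, Real.rpow_one]
    _ ≤ a ^ q * √d ^ (1 - q) := by gcongr; exact Real.le_sqrt_of_sq_le had
    _ = a ^ q * d ^ ((1 - q) / 2) := by
        rw [Real.sqrt_eq_rpow, ← Real.rpow_mul hd]
        ring_nf

theorem Matrix.PosSemidef.sq_apply_le {n : Type*} [Fintype n] {A : Matrix n n ℝ}
    (hA : A.PosSemidef) (i j : n) : A i j ^ 2 ≤ A i i * A j j := by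
  have hminor : A i j * A j i ≤ A i i * A j j := by
    have hdet := (hA.submatrix ![i, j]).det_nonneg
    rw [det_fin_two] at hdet
    simpa using hdet
  have hsymm : A j i = A i j := hA.isHermitian.apply i j
  rwa [hsymm, ← sq] at hminor

theorem Matrix.PosSemidef.abs_apply_le_rpow_mul_rpow {n : Type*} [Fintype n]
    {A : Matrix n n ℝ} (hA : A.PosSemidef) (i j : n) {q : ℝ} (hq : q ≤ 1) :
    |A i j| ≤ |A i j| ^ q * (A i i * A j j) ^ ((1 - q) / 2) :=
  le_rpow_mul_rpow_of_sq_le (abs_nonneg _) (by simpa only [sq_abs] using hA.sq_apply_le i j) hq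

theorem stmt7_general (p : ℕ)
    (Su : Matrix (Fin p) (Fin p) ℝ) (hSu : Su.PosSemidef)
    (q : ℝ) (hq : q ∈ Set.Icc (0 : ℝ) 1) :
    specNorm Su ≤ (⨆ j, ∑ i, |Su i j|) ∧
    (⨆ j, ∑ i, |Su i j|)
      ≤ ⨆ i, ∑ j, |Su i j| ^ q * (Su i i * Su j j) ^ ((1 - q) / 2) := by
  refine ⟨by simpa only [specNorm, Real.norm_eq_abs] using
    hSu.isHermitian.norm_toEuclideanCLM_le_iSup_sum_norm, ?_⟩
  refine ciSup_mono (Finite.bddAbove_range _) fun j => sum_le_sum fun i _ => ?_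
  rw [← hSu.isHermitian.apply i j, star_trivial]
  exact hSu.abs_apply_le_rpow_mul_rpow j i hq.2

/-- For a positive semidefinite `Su` and `q ∈ [0,1]`:
`‖Su‖ ≤ ‖Su‖₁ ≤ max_i ∑_j |σ_{ij}|^q (σ_{ii} σ_{jj})^{(1−q)/2}`,
where `‖·‖₁` is the maximum absolute column sum norm. -/
theorem stmt7 (p : ℕ) (hp : 0 < p)
    (Su : Matrix (Fin p) (Fin p) ℝ) (hSu : Su.PosSemidef)
    (q : ℝ) (hq : q ∈ Set.Icc (0 : ℝ) 1) :
    specNorm Su ≤ (⨆ j, ∑ i, |Su i j|) ∧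
    (⨆ j, ∑ i, |Su i j|)
      ≤ ⨆ i, ∑ j, |Su i j| ^ q * (Su i i * Su j j) ^ ((1 - q) / 2) :=
  stmt7_general p Su hSu q hq
end

section
/- Let p be a positive integer, let (σ_{ij})_{i,j≤p} and (σ̂_{ij})_{i,j≤p} be real numbers, and let ω > 0, M > 0 with max_{i,j≤p} |σ̂_{ij} − σ_{ij}| ≤ M·ω. Let 0 < θ₂ ≤ θ₁ and suppose for each (i,j) that θ_{ij} ∈ [θ₂, θ₁], and set C = 2M/θ₂ and threshold τ_{ij} = C·ω·θ_{ij}. Let s_{ij} : ℝ → ℝ satisfy s_{ij}(z) = 0 whenever |z| ≤ τ_{ij} and |s_{ij}(z) − z| ≤ τ_{ij} for all z. Then for every q ∈ [0,1), max_{i≤p} Σ_{j=1}^{p} |s_{ij}(σ̂_{ij}) − σ_{ij}| ≤ (Cθ₁ + M)·(M^{−q} + (Cθ₁ + M)^{−q}) · ω^{1−q} · max_{i≤p} Σ_{j=1}^{p} |σ_{ij}|^q. -/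
open BigOperators

/-- Deterministic core of the adaptive thresholding bound (proof of **Theorem A.1**).
If `|σ̂_{ij} − σ_{ij}| ≤ M·ω` for all `i,j`, the entry-dependent quantities `θ_{ij}`
lie in `[θ₂, θ₁]` with `0 < θ₂ ≤ θ₁`, `C = 2M/θ₂`, the thresholds are
`τ_{ij} = C·ω·θ_{ij}`, and `s_{ij}` is a generalized shrinkage rule with threshold
`τ_{ij}`, then for every `i`,
`∑_j |s_{ij}(σ̂_{ij}) − σ_{ij}| ≤ (Cθ₁+M)(M^{−q} + (Cθ₁+M)^{−q}) ω^{1−q} · max_{i'} ∑_j |σ_{i'j}|^q`. -/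
theorem stmt10 (p : ℕ) (hp : 0 < p)
    (sig sighat θ : Fin p → Fin p → ℝ)
    (ω M : ℝ) (hω : 0 < ω) (hM : 0 < M)
    (herr : ∀ i j, |sighat i j - sig i j| ≤ M * ω)
    (θ₁ θ₂ : ℝ) (hθ₂ : 0 < θ₂) (hθ : θ₂ ≤ θ₁)
    (hθij : ∀ i j, θ i j ∈ Set.Icc θ₂ θ₁)
    (C : ℝ) (hC : C = 2 * M / θ₂)
    (τ : Fin p → Fin p → ℝ) (hτ : ∀ i j, τ i j = C * ω * θ i j)
    (s : Fin p → Fin p → ℝ → ℝ)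
    (hs0 : ∀ i j z, |z| ≤ τ i j → s i j z = 0)
    (hs1 : ∀ i j z, |s i j z - z| ≤ τ i j)
    (q : ℝ) (hq0 : 0 ≤ q) (hq1 : q < 1) :
    ∀ i, ∑ j, |s i j (sighat i j) - sig i j|
      ≤ (C * θ₁ + M) * (M ^ (-q) + (C * θ₁ + M) ^ (-q)) * ω ^ (1 - q)
          * ⨆ i', ∑ j, |sig i' j| ^ q := by
  intro i
  have hθ₁ : 0 < θ₁ := lt_of_lt_of_le hθ₂ hθ
  have hC0 : 0 < C := by rw [hC]; positivity
  have hA : 0 < C * θ₁ + M := by positivity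
  set A := C * θ₁ + M with hAdef
  set K := A * (M ^ (-q) + A ^ (-q)) * ω ^ (1 - q) with hK
  have hK0 : 0 ≤ K := by positivity
  have hCθ₂ : C * θ₂ = 2 * M := by rw [hC]; field_simp
  have key : ∀ j, |s i j (sighat i j) - sig i j| ≤ K * |sig i j| ^ q := by
    intro j
    have hθm := hθij i j
    have hτ1 : τ i j ≤ C * ω * θ₁ := by
      rw [hτ]
      nlinarith [mul_nonneg (mul_pos hC0 hω).le (sub_nonneg.mpr hθm.2)]
    have hτ2 : 2 * M * ω ≤ τ i j := by
      rw [hτ]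
      have h2 : C * ω * θ₂ = 2 * M * ω := by rw [mul_comm C ω, mul_assoc, hCθ₂]; ring
      nlinarith [mul_nonneg (mul_pos hC0 hω).le (sub_nonneg.mpr hθm.1)]
    by_cases hcase : M * ω ≤ |sig i j|
    · -- large signal case
      have h1 : |s i j (sighat i j) - sig i j| ≤ A * ω := by
        calc |s i j (sighat i j) - sig i j|
            ≤ |s i j (sighat i j) - sighat i j| + |sighat i j - sig i j| :=
              abs_sub_le _ _ _
          _ ≤ τ i j + M * ω := add_le_add (hs1 i j _) (herr i j)
          _ ≤ C * ω * θ₁ + M * ω := by linarith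
          _ = A * ω := by rw [hAdef]; ring
      have h4 : (M * ω) ^ q ≤ |sig i j| ^ q :=
        Real.rpow_le_rpow (by positivity) hcase hq0
      have h5 : ω ^ q = M ^ (-q) * (M * ω) ^ q := by
        rw [Real.mul_rpow hM.le hω.le, ← mul_assoc, ← Real.rpow_add hM]
        simp
      have h6 : ω ^ q ≤ M ^ (-q) * |sig i j| ^ q := by
        rw [h5]
        exact mul_le_mul_of_nonneg_left h4 (by positivity)
      have h7 : ω = ω ^ (1 - q) * ω ^ q := by
        rw [← Real.rpow_add hω]; norm_num
      have h8 : A * ω ≤ A * M ^ (-q) * ω ^ (1 - q) * |sig i j| ^ q := by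
        calc A * ω = A * (ω ^ (1 - q) * ω ^ q) := by rw [← h7]
          _ ≤ A * (ω ^ (1 - q) * (M ^ (-q) * |sig i j| ^ q)) := by
              apply mul_le_mul_of_nonneg_left _ hA.le
              exact mul_le_mul_of_nonneg_left h6 (by positivity)
          _ = A * M ^ (-q) * ω ^ (1 - q) * |sig i j| ^ q := by ring
      have h9 : K * |sig i j| ^ q
          = A * M ^ (-q) * ω ^ (1 - q) * |sig i j| ^ q
            + A * A ^ (-q) * ω ^ (1 - q) * |sig i j| ^ q := by
        rw [hK]; ring
      have h10 : 0 ≤ A * A ^ (-q) * ω ^ (1 - q) * |sig i j| ^ q := by positivity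
      linarith
    · -- small signal case: s = 0
      push_neg at hcase
      have hzero : s i j (sighat i j) = 0 := by
        apply hs0
        calc |sighat i j| ≤ |sighat i j - sig i j| + |sig i j| := by
              have := abs_sub_abs_le_abs_sub (sighat i j) (sig i j); linarith [abs_sub_le (sighat i j) (sig i j) 0, abs_sub_le (sighat i j) 0 (sig i j)]
          _ ≤ M * ω + M * ω := add_le_add (herr i j) hcase.le
          _ = 2 * M * ω := by ring
          _ ≤ τ i j := hτ2
      rw [hzero]
      rw [zero_sub, abs_neg]
      rcases eq_or_lt_of_le (abs_nonneg (sig i j)) with h0 | h0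
      · rw [← h0]
        positivity
      · have hs' : |sig i j| = |sig i j| ^ (1 - q) * |sig i j| ^ q := by
          rw [← Real.rpow_add h0]; norm_num
        have hMA : M * ω ≤ A * ω := by nlinarith
        have h11 : |sig i j| ^ (1 - q) ≤ (A * ω) ^ (1 - q) :=
          Real.rpow_le_rpow (abs_nonneg _) (le_trans hcase.le hMA) (by linarith)
        have h12 : (A * ω) ^ (1 - q) = A * A ^ (-q) * ω ^ (1 - q) := by
          rw [Real.mul_rpow hA.le hω.le]
          congr 1
          rw [show (1 : ℝ) - q = 1 + (-q) by ring, Real.rpow_add hA, Real.rpow_one]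
        have h13 : |sig i j| ≤ A * A ^ (-q) * ω ^ (1 - q) * |sig i j| ^ q := by
          calc |sig i j| = |sig i j| ^ (1 - q) * |sig i j| ^ q := hs'
            _ ≤ (A * ω) ^ (1 - q) * |sig i j| ^ q :=
                mul_le_mul_of_nonneg_right h11 (by positivity)
            _ = A * A ^ (-q) * ω ^ (1 - q) * |sig i j| ^ q := by rw [h12]
        have h9 : K * |sig i j| ^ q
            = A * M ^ (-q) * ω ^ (1 - q) * |sig i j| ^ q
              + A * A ^ (-q) * ω ^ (1 - q) * |sig i j| ^ q := by
          rw [hK]; ring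
        have h10 : 0 ≤ A * M ^ (-q) * ω ^ (1 - q) * |sig i j| ^ q := by positivity
        linarith
  calc ∑ j, |s i j (sighat i j) - sig i j|
      ≤ ∑ j, K * |sig i j| ^ q := Finset.sum_le_sum fun j _ => key j
    _ = K * ∑ j, |sig i j| ^ q := by rw [Finset.mul_sum]
    _ ≤ K * ⨆ i', ∑ j, |sig i' j| ^ q := by
        apply mul_le_mul_of_nonneg_left _ hK0
        exact le_ciSup (f := fun i' => ∑ j, |sig i' j| ^ q)
          (Set.Finite.bddAbove (Set.finite_range _)) i
end

section
/- Let p, K be positive integers, let b₁, …, b_p and b̂₁, …, b̂_p be vectors in ℝ^K, and let H be a real K×K matrix. Then max_{i,j ≤ p} |b̂_iᵀ b̂_j − b_iᵀ b_j| ≤ (max_{i≤p} ‖b̂_i − H b_i‖)² + 2·(max_{i≤p} ‖b̂_i − H b_i‖)·(max_{j≤p} ‖H b_j‖) + (max_{i≤p} ‖b_i‖²)·‖Hᵀ H − I_K‖. -/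
/-!
Write `u = b̂ - H b` for the estimation error. Expanding `b̂ᵢ = uᵢ + H bᵢ` gives
`b̂ᵢᵀ b̂ⱼ - bᵢᵀ bⱼ = uᵢᵀ uⱼ + uᵢᵀ H bⱼ + (H bᵢ)ᵀ uⱼ + bᵢᵀ (Hᵀ H - I) bⱼ`,
and each term is bounded by Cauchy–Schwarz, the last one together with the operator
norm bound `‖(Hᵀ H - I) bⱼ‖ ≤ ‖Hᵀ H - I‖ ‖bⱼ‖`.
-/

open Matrix BigOperators

theorem dotProduct_sub_dotProduct_eq {R n : Type*} [CommRing R] [Fintype n] [DecidableEq n]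
    (H : Matrix n n R) (x y x' y' : n → R) :
    x' ⬝ᵥ y' - x ⬝ᵥ y
      = (x' - H *ᵥ x) ⬝ᵥ (y' - H *ᵥ y) + (x' - H *ᵥ x) ⬝ᵥ (H *ᵥ y)
        + (H *ᵥ x) ⬝ᵥ (y' - H *ᵥ y) + x ⬝ᵥ ((Hᵀ * H - 1) *ᵥ y) := by
  have hHH : (H *ᵥ x) ⬝ᵥ (H *ᵥ y) = x ⬝ᵥ ((Hᵀ * H) *ᵥ y) := by
    rw [← mulVec_mulVec, dotProduct_mulVec x, vecMul_transpose]
  simp only [sub_mulVec, one_mulVec, dotProduct_sub, sub_dotProduct, ← hHH]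
  ring

theorem vecNorm_eq_norm {m : ℕ} (v : Fin m → ℝ) : vecNorm v = ‖WithLp.toLp 2 v‖ := by
  simp [vecNorm, EuclideanSpace.norm_eq, sq_abs]

theorem vecNorm_nonneg {m : ℕ} (v : Fin m → ℝ) : 0 ≤ vecNorm v :=
  Real.sqrt_nonneg _

theorem specNorm_nonneg {m : ℕ} (A : Matrix (Fin m) (Fin m) ℝ) : 0 ≤ specNorm A :=
  norm_nonneg _

theorem abs_dotProduct_le_vecNorm_mul {m : ℕ} (v w : Fin m → ℝ) :
    |v ⬝ᵥ w| ≤ vecNorm v * vecNorm w := by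
  rw [vecNorm_eq_norm, vecNorm_eq_norm]
  simpa [PiLp.inner_apply, dotProduct, mul_comm] using
    abs_real_inner_le_norm (WithLp.toLp 2 v) (WithLp.toLp 2 w)

theorem vecNorm_mulVec_le {m : ℕ} (A : Matrix (Fin m) (Fin m) ℝ) (v : Fin m → ℝ) :
    vecNorm (A *ᵥ v) ≤ specNorm A * vecNorm v := by
  rw [vecNorm_eq_norm, vecNorm_eq_norm]
  exact (toEuclideanCLM (𝕜 := ℝ) A).le_opNorm (WithLp.toLp 2 v)

theorem abs_dotProduct_sub_dotProduct_le {m : ℕ} (H : Matrix (Fin m) (Fin m) ℝ)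
    (x y x' y' : Fin m → ℝ) :
    |x' ⬝ᵥ y' - x ⬝ᵥ y|
      ≤ vecNorm (x' - H *ᵥ x) * vecNorm (y' - H *ᵥ y)
        + vecNorm (x' - H *ᵥ x) * vecNorm (H *ᵥ y)
        + vecNorm (H *ᵥ x) * vecNorm (y' - H *ᵥ y)
        + vecNorm x * vecNorm y * specNorm (Hᵀ * H - 1) := by
  have hlast : |x ⬝ᵥ ((Hᵀ * H - 1) *ᵥ y)| ≤ vecNorm x * vecNorm y * specNorm (Hᵀ * H - 1) :=
    calc |x ⬝ᵥ ((Hᵀ * H - 1) *ᵥ y)|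
        ≤ vecNorm x * vecNorm ((Hᵀ * H - 1) *ᵥ y) := abs_dotProduct_le_vecNorm_mul _ _
      _ ≤ vecNorm x * (specNorm (Hᵀ * H - 1) * vecNorm y) :=
          mul_le_mul_of_nonneg_left (vecNorm_mulVec_le _ _) (vecNorm_nonneg _)
      _ = vecNorm x * vecNorm y * specNorm (Hᵀ * H - 1) := by ring
  rw [dotProduct_sub_dotProduct_eq H]
  refine (abs_add_le _ _).trans (add_le_add ((abs_add_three _ _ _).trans ?_) hlast)
  gcongr <;> exact abs_dotProduct_le_vecNorm_mul _ _

/-- Elementwise bound `‖Λ̂ Λ̂ᵀ − B Bᵀ‖_max` in terms of the uniform loading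
estimation errors and the rotation matrix `H` (from the proof of **Theorem 3.2**):
for all `i, j ≤ p`,
`|b̂ᵢᵀ b̂ⱼ − bᵢᵀ bⱼ| ≤ (maxᵢ ‖b̂ᵢ − H bᵢ‖)² + 2 (maxᵢ ‖b̂ᵢ − H bᵢ‖)(maxⱼ ‖H bⱼ‖)
  + (maxᵢ ‖bᵢ‖²) ‖Hᵀ H − I_K‖`. -/
theorem stmt12 (p K : ℕ)
    (b bhat : Fin p → (Fin K → ℝ)) (H : Matrix (Fin K) (Fin K) ℝ) :
    ∀ i j : Fin p,
      |(∑ k, bhat i k * bhat j k) - ∑ k, b i k * b j k|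
        ≤ (⨆ i', vecNorm (bhat i' - H *ᵥ b i')) ^ 2
          + 2 * (⨆ i', vecNorm (bhat i' - H *ᵥ b i'))
              * (⨆ j', vecNorm (H *ᵥ b j'))
          + (⨆ i', vecNorm (b i') ^ 2) * specNorm (Hᵀ * H - 1) := by
  intro i j
  set e := ⨆ i', vecNorm (bhat i' - H *ᵥ b i')
  set h := ⨆ j', vecNorm (H *ᵥ b j')
  set r := ⨆ i', vecNorm (b i') ^ 2
  have he (i' : Fin p) : vecNorm (bhat i' - H *ᵥ b i') ≤ e :=
    Finite.le_ciSup (fun i' => vecNorm (bhat i' - H *ᵥ b i')) i'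
  have hh (j' : Fin p) : vecNorm (H *ᵥ b j') ≤ h :=
    Finite.le_ciSup (fun j' => vecNorm (H *ᵥ b j')) j'
  have hr (i' : Fin p) : vecNorm (b i') ^ 2 ≤ r :=
    Finite.le_ciSup (fun i' => vecNorm (b i') ^ 2) i'
  have hbb : vecNorm (b i) * vecNorm (b j) ≤ r := by
    nlinarith [hr i, hr j, sq_nonneg (vecNorm (b i) - vecNorm (b j))]
  have he0 : 0 ≤ e := (vecNorm_nonneg _).trans (he i)
  have hh0 : 0 ≤ h := (vecNorm_nonneg _).trans (hh i)
  calc |(∑ k, bhat i k * bhat j k) - ∑ k, b i k * b j k|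
      ≤ _ := abs_dotProduct_sub_dotProduct_le H (b i) (b j) (bhat i) (bhat j)
    _ ≤ e * e + e * h + h * e + r * specNorm (Hᵀ * H - 1) := by
        refine add_le_add (add_le_add (add_le_add ?_ ?_) ?_)
          (mul_le_mul_of_nonneg_right hbb (specNorm_nonneg _))
        · exact mul_le_mul (he i) (he j) (vecNorm_nonneg _) he0
        · exact mul_le_mul (he i) (hh j) (vecNorm_nonneg _) he0
        · exact mul_le_mul (hh i) (he j) (vecNorm_nonneg _) hh0
    _ = e ^ 2 + 2 * e * h + r * specNorm (Hᵀ * H - 1) := by ring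
end
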